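/- arXiv:2107.12941 — 11 statements merged into one kernel-verified Lean document; each statement's English description precedes it below -/
import Mathlib

section
/- Let d ∈ ℕ and let f : 𝔻 → 𝔹_d satisfy f(0) = 0 and be Lipschitz from the Dirichlet metric to the pseudohyperbolic metric, i.e. there is L < ∞ with ρ(f(z), f(w)) ≤ L·δ(z,w) for all z,w ∈ 𝔻. Then there exists a constant C ∈ (0,∞) such that ‖f(z)‖ ≤ 1 − exp(−C·(log(1/(1−|z|)))^{1/2}) for all z ∈ 𝔻. -/
/-!
Along a radius the Dirichlet kernel is real: `k(z, cz) = K(c|z|²)` with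
`K(t) = log(1/(1-t))/t = ∑ tⁿ/(n+1)`, increasing on `[0,1)`. With `φ = log K`, the inequality
`1 - x ≤ -log x` gives `δ(z, cz)² ≤ φ(|z|²) - φ(c²|z|²)` for `0 ≤ c ≤ 1`. Cutting the radius
`[0, z]` at the points where `φ` crosses multiples of `1/(4L²)` yields `n ≈ 4L² φ(|z|²)` pieces of
Dirichlet length `≤ 1/(2L)`, whose images have pseudohyperbolic length `≤ 1/2`; each such step
costs at most a factor `3/16` in `1 - ‖f‖`, so `1 - ‖f z‖ ≥ (3/16)ⁿ`. Since
`φ(|z|²) ≤ 1 + 2 √(log(1/(1-|z|)))`, this is the claim for `|z|` away from `0`; near `0` the single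
step from `0` gives `‖f z‖ ≤ L √(log(1/(1-|z|)))`, which suffices there.
-/

open Complex Metric

/-- The reproducing kernel of the Dirichlet space. -/
noncomputable def dirK (z w : ℂ) : ℂ :=
  if z * (starRingEnd ℂ) w = 0 then 1
  else (1 / (z * (starRingEnd ℂ) w)) * Complex.log (1 / (1 - z * (starRingEnd ℂ) w))

/-- The metric on the disc induced by the Dirichlet space. -/
noncomputable def dirDelta (z w : ℂ) : ℝ :=
  Real.sqrt (1 - ‖dirK z w‖ ^ 2 / ((dirK z z).re * (dirK w w).re))

/-- The pseudohyperbolic metric on the unit ball of `ℂ^d`. -/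
noncomputable def pseudoHyp {d : ℕ} (z w : EuclideanSpace ℂ (Fin d)) : ℝ :=
  Real.sqrt (1 - (1 - ‖z‖ ^ 2) * (1 - ‖w‖ ^ 2) / ‖1 - (inner ℂ w z : ℂ)‖ ^ 2)

noncomputable def dirKReal (t : ℝ) : ℝ :=
  if t = 0 then 1 else Real.log (1 - t)⁻¹ / t

noncomputable def logDirKReal (t : ℝ) : ℝ := Real.log (dirKReal t)

section DirKReal

variable {s t u : ℝ}

theorem hasSum_dirKReal (h0 : 0 ≤ t) (h1 : t < 1) :
    HasSum (fun n : ℕ => t ^ n / (n + 1)) (dirKReal t) := by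
  rcases h0.eq_or_lt with rfl | hpos
  · convert hasSum_ite_eq 0 (1 : ℝ) using 1
    · ext n; cases n <;> simp
    · simp [dirKReal]
  · have h := (Real.hasSum_pow_div_log_of_abs_lt_one (abs_lt.2 ⟨by linarith, h1⟩)).div_const t
    rw [dirKReal, if_neg hpos.ne', Real.log_inv]
    have hterm (n : ℕ) : t ^ (n + 1) / (n + 1) / t = t ^ n / (n + 1) := by
      rw [pow_succ, mul_div_right_comm, mul_div_cancel_right₀ _ hpos.ne']
    simpa only [hterm, neg_div] using h

theorem one_le_dirKReal (h0 : 0 ≤ t) (h1 : t < 1) : 1 ≤ dirKReal t := by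
  simpa using le_hasSum (hasSum_dirKReal h0 h1) 0 fun n _ => by positivity

theorem one_lt_dirKReal (h0 : 0 < t) (h1 : t < 1) : 1 < dirKReal t := by
  have h := sum_le_hasSum (Finset.range 2) (fun n _ => by positivity) (hasSum_dirKReal h0.le h1)
  norm_num [Finset.sum_range_succ] at h
  linarith

theorem dirKReal_pos (h0 : 0 ≤ t) (h1 : t < 1) : 0 < dirKReal t :=
  zero_lt_one.trans_le (one_le_dirKReal h0 h1)

theorem dirKReal_le_dirKReal (hs : 0 ≤ s) (hst : s ≤ t) (ht : t < 1) :
    dirKReal s ≤ dirKReal t :=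
  hasSum_le (fun n => by gcongr) (hasSum_dirKReal hs (hst.trans_lt ht))
    (hasSum_dirKReal (hs.trans hst) ht)

theorem dirKReal_le_inv_one_sub (h0 : 0 ≤ t) (h1 : t < 1) : dirKReal t ≤ (1 - t)⁻¹ :=
  hasSum_le (fun n => div_le_self (pow_nonneg h0 n) (by linarith [n.cast_nonneg (α := ℝ)]))
    (hasSum_dirKReal h0 h1) (hasSum_geometric_of_lt_one h0 h1)

theorem dirKReal_le_two_add (h0 : 0 ≤ t) (h1 : t < 1) :
    dirKReal t ≤ 2 + 2 * Real.log (1 - t)⁻¹ := by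
  have hlog : 0 ≤ Real.log (1 - t)⁻¹ :=
    Real.log_nonneg (one_le_inv₀ (by linarith) |>.2 (by linarith))
  rcases le_or_gt t (1 / 2) with ht | ht
  · have : (1 - t)⁻¹ ≤ 2 := inv_le_of_inv_le₀ (by norm_num) (by linarith)
    linarith [dirKReal_le_inv_one_sub h0 h1]
  · rw [dirKReal, if_neg (by linarith), div_le_iff₀ (by linarith)]
    nlinarith

theorem continuousOn_dirKReal (h0 : 0 ≤ u) (h1 : u < 1) :
    ContinuousOn dirKReal (Set.Icc 0 u) := by
  have hsum : ContinuousOn (fun t : ℝ => ∑' n : ℕ, t ^ n / (n + 1)) (Set.Icc 0 u) := by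
    refine continuousOn_tsum (fun n => by fun_prop) (summable_geometric_of_lt_one h0 h1) ?_
    intro n t ht
    rw [Real.norm_of_nonneg (by have := ht.1; positivity)]
    exact (div_le_self (pow_nonneg ht.1 n) (by linarith [n.cast_nonneg (α := ℝ)])).trans
      (pow_le_pow_left₀ ht.1 ht.2 n)
  exact hsum.congr fun t ht => (hasSum_dirKReal ht.1 (ht.2.trans_lt h1)).tsum_eq.symm

theorem logDirKReal_zero : logDirKReal 0 = 0 := by
  simp [logDirKReal, dirKReal]

theorem logDirKReal_pos (h0 : 0 < t) (h1 : t < 1) : 0 < logDirKReal t :=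
  Real.log_pos (one_lt_dirKReal h0 h1)

theorem logDirKReal_le_log_inv_one_sub (h0 : 0 ≤ t) (h1 : t < 1) :
    logDirKReal t ≤ Real.log (1 - t)⁻¹ :=
  Real.log_le_log (dirKReal_pos h0 h1) (dirKReal_le_inv_one_sub h0 h1)

theorem exists_logDirKReal_eq {y : ℝ} (h0 : 0 ≤ u) (h1 : u < 1) (hy0 : 0 ≤ y)
    (hy : y ≤ logDirKReal u) : ∃ t ∈ Set.Icc 0 u, logDirKReal t = y := by
  refine intermediate_value_Icc h0 ?_ ⟨by rwa [logDirKReal_zero], hy⟩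
  exact (continuousOn_dirKReal h0 h1).log fun t ht => (dirKReal_pos ht.1 (ht.2.trans_lt h1)).ne'

end DirKReal

theorem dirK_eq_dirKReal {z w : ℂ} {t : ℝ} (h : z * starRingEnd ℂ w = t) (ht : t ≤ 1) :
    dirK z w = dirKReal t := by
  rw [dirK, h, dirKReal]
  by_cases h0 : t = 0
  · simp [h0]
  · have hlog : Complex.log (1 / (1 - t)) = (Real.log (1 - t)⁻¹ : ℝ) := by
      rw [ofReal_log (inv_nonneg.2 (sub_nonneg.2 ht))]
      push_cast
      rw [one_div]
    rw [if_neg (by exact_mod_cast h0), if_neg h0, hlog]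
    push_cast
    ring

theorem dirDelta_ofReal_mul_le {z : ℂ} {c : ℝ} (hz : ‖z‖ < 1) (hc0 : 0 ≤ c) (hc1 : c ≤ 1) :
    dirDelta z (c * z) ≤ √(logDirKReal (‖z‖ ^ 2) - logDirKReal (c ^ 2 * ‖z‖ ^ 2)) := by
  set u := ‖z‖ ^ 2
  have hu0 : 0 ≤ u := by positivity
  have hu1 : u < 1 := pow_lt_one₀ (norm_nonneg z) hz two_ne_zero
  have hcu : c * u ≤ u := mul_le_of_le_one_left hu0 hc1
  have hccu : c ^ 2 * u ≤ c * u := by nlinarith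
  have hzz : z * starRingEnd ℂ z = (u : ℂ) := by
    rw [mul_conj, normSq_eq_norm_sq]
  have k1 : dirK z (c * z) = dirKReal (c * u) := dirK_eq_dirKReal
    (by rw [map_mul, conj_ofReal, mul_left_comm, hzz]; push_cast; rfl) (by linarith)
  have k2 : dirK z z = dirKReal u := dirK_eq_dirKReal hzz hu1.le
  have k3 : dirK (c * z) (c * z) = dirKReal (c ^ 2 * u) := dirK_eq_dirKReal
    (by rw [map_mul, conj_ofReal, mul_mul_mul_comm, hzz]; push_cast; ring) (by linarith)
  have hKt := dirKReal_pos (by positivity) (hccu.trans_lt (hcu.trans_lt hu1))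
  have hKu := dirKReal_pos hu0 hu1
  have hmono : dirKReal (c ^ 2 * u) ≤ dirKReal (c * u) :=
    dirKReal_le_dirKReal (by positivity) hccu (hcu.trans_lt hu1)
  rw [dirDelta, k1, k2, k3, norm_real, Real.norm_of_nonneg (by linarith), ofReal_re, ofReal_re]
  apply Real.sqrt_le_sqrt
  have hratio : dirKReal (c ^ 2 * u) / dirKReal u ≤
      dirKReal (c * u) ^ 2 / (dirKReal u * dirKReal (c ^ 2 * u)) := by
    rw [div_le_div_iff₀ (by positivity) (by positivity)]
    have := mul_le_mul hmono hmono hKt.le (hKt.le.trans hmono)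
    nlinarith
  calc 1 - dirKReal (c * u) ^ 2 / (dirKReal u * dirKReal (c ^ 2 * u))
      ≤ 1 - (dirKReal u / dirKReal (c ^ 2 * u))⁻¹ := by rw [inv_div]; linarith
    _ ≤ Real.log (dirKReal u / dirKReal (c ^ 2 * u)) :=
      Real.one_sub_inv_le_log_of_pos (by positivity)
    _ = logDirKReal u - logDirKReal (c ^ 2 * u) := Real.log_div (by positivity) (by positivity)

section PseudoHyp

variable {d : ℕ}

theorem pseudoHyp_zero_right (a : EuclideanSpace ℂ (Fin d)) : pseudoHyp a 0 = ‖a‖ := by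
  simp [pseudoHyp, Real.sqrt_sq (norm_nonneg a)]

theorem one_sub_sq_mul_le_of_pseudoHyp_le {a b : EuclideanSpace ℂ (Fin d)} {r : ℝ}
    (ha : ‖a‖ < 1) (hb : ‖b‖ < 1) (hr : 0 ≤ r) (h : pseudoHyp a b ≤ r) :
    (1 - r ^ 2) * (1 - ‖b‖) ≤ 4 * (1 - ‖a‖) := by
  set D := ‖1 - inner ℂ b a‖
  have hinner : ‖inner ℂ b a‖ ≤ ‖b‖ :=
    (norm_inner_le_norm b a).trans (mul_le_of_le_one_right (norm_nonneg b) ha.le)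
  have hD : 1 - ‖b‖ ≤ D := by
    have := norm_sub_norm_le (1 : ℂ) (inner ℂ b a)
    rw [norm_one] at this
    linarith
  have hP : (1 - r ^ 2) * D ^ 2 ≤ (1 - ‖a‖ ^ 2) * (1 - ‖b‖ ^ 2) := by
    rw [pseudoHyp, Real.sqrt_le_left hr, sub_le_comm, le_div_iff₀ (by nlinarith)] at h
    exact h
  have ha0 := norm_nonneg a
  have hb0 := norm_nonneg b
  rcases le_or_gt (1 - r ^ 2) 0 with hneg | hpos
  · nlinarith
  · have : (1 - r ^ 2) * (1 - ‖b‖) * (1 - ‖b‖) ≤ 4 * (1 - ‖a‖) * (1 - ‖b‖) :=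
      calc (1 - r ^ 2) * (1 - ‖b‖) * (1 - ‖b‖) ≤ (1 - r ^ 2) * D ^ 2 := by
            rw [mul_assoc, ← sq]; gcongr
        _ ≤ (1 - ‖a‖ ^ 2) * (1 - ‖b‖ ^ 2) := hP
        _ ≤ 4 * (1 - ‖a‖) * (1 - ‖b‖) := by
            have : 0 ≤ (1 - ‖a‖) * (1 - ‖b‖) * (4 - (1 + ‖a‖) * (1 + ‖b‖)) :=
              mul_nonneg (mul_nonneg (by linarith) (by linarith)) (by nlinarith)
            linarith
    exact le_of_mul_le_mul_right this (sub_pos.2 hb)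

end PseudoHyp

theorem log_inv_one_sub_sq_le {R : ℝ} (h0 : 0 ≤ R) (h1 : R < 1) :
    Real.log (1 - R ^ 2)⁻¹ ≤ Real.log (1 / (1 - R)) := by
  have hR2 : R ^ 2 ≤ R := by nlinarith
  rw [one_div]
  exact Real.log_le_log (inv_pos.2 (by nlinarith)) (inv_anti₀ (by linarith) (by linarith))

theorem logDirKReal_sq_le_log {R : ℝ} (h0 : 0 ≤ R) (h1 : R < 1) :
    logDirKReal (R ^ 2) ≤ Real.log (1 / (1 - R)) :=
  (logDirKReal_le_log_inv_one_sub (by positivity) (pow_lt_one₀ h0 h1 two_ne_zero)).trans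
    (log_inv_one_sub_sq_le h0 h1)

theorem logDirKReal_sq_le_one_add {R : ℝ} (h0 : 0 ≤ R) (h1 : R < 1) :
    logDirKReal (R ^ 2) ≤ 1 + 2 * √(Real.log (1 / (1 - R))) := by
  set s := √(Real.log (1 / (1 - R)))
  have hs : 0 ≤ s := Real.sqrt_nonneg _
  have hs2 : s ^ 2 = Real.log (1 / (1 - R)) :=
    Real.sq_sqrt (Real.log_nonneg (by rw [le_div_iff₀ (by linarith)]; linarith))
  have hK : dirKReal (R ^ 2) ≤ 2 * Real.exp s ^ 2 :=
    calc dirKReal (R ^ 2) ≤ 2 + 2 * Real.log (1 - R ^ 2)⁻¹ :=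
          dirKReal_le_two_add (by positivity) (pow_lt_one₀ h0 h1 two_ne_zero)
      _ ≤ 2 * (1 + s) ^ 2 := by nlinarith [log_inv_one_sub_sq_le h0 h1]
      _ ≤ 2 * Real.exp s ^ 2 := by gcongr; linarith [Real.add_one_le_exp s]
  calc logDirKReal (R ^ 2) ≤ Real.log (2 * Real.exp s ^ 2) :=
        Real.log_le_log (dirKReal_pos (by positivity) (pow_lt_one₀ h0 h1 two_ne_zero)) hK
    _ = Real.log 2 + 2 * s := by
        rw [Real.log_mul two_ne_zero (by positivity), Real.log_pow, Real.log_exp]; push_cast; ring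
    _ ≤ 1 + 2 * s := by linarith [Real.log_two_lt_d9]

theorem pow_le_one_sub_norm_of_logDirKReal_le {d : ℕ} {f : ℂ → EuclideanSpace ℂ (Fin d)} {r : ℝ}
    (hr : 0 ≤ r) (hmap : ∀ z ∈ ball (0 : ℂ) 1, ‖f z‖ < 1) (h0 : f 0 = 0)
    (hstep : ∀ z ∈ ball (0 : ℂ) 1, ∀ w ∈ ball (0 : ℂ) 1,
      dirDelta z w ≤ r → pseudoHyp (f z) (f w) ≤ 1 / 2)
    (n : ℕ) {z : ℂ} (hz : z ∈ ball (0 : ℂ) 1) (hn : logDirKReal (‖z‖ ^ 2) ≤ n * r ^ 2) :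
    (3 / 16 : ℝ) ^ n ≤ 1 - ‖f z‖ := by
  induction n generalizing z with
  | zero =>
    obtain rfl : z = 0 := by
      by_contra hz0
      have := logDirKReal_pos (pow_pos (norm_pos_iff.2 hz0) 2)
        (pow_lt_one₀ (norm_nonneg z) (mem_ball_zero_iff.1 hz) two_ne_zero)
      simp only [CharP.cast_eq_zero, zero_mul] at hn
      linarith
    simp [h0]
  | succ n ih =>
    rcases eq_or_ne z 0 with rfl | hz0
    · simpa [h0] using pow_le_one₀ (by norm_num) (by norm_num)
    have hR : ‖z‖ < 1 := mem_ball_zero_iff.1 hz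
    have hu0 : 0 < ‖z‖ ^ 2 := pow_pos (norm_pos_iff.2 hz0) 2
    have hu1 : ‖z‖ ^ 2 < 1 := pow_lt_one₀ (norm_nonneg z) hR two_ne_zero
    obtain ⟨t, ⟨ht0, htu⟩, ht⟩ := exists_logDirKReal_eq hu0.le hu1
      (le_min (by positivity) (logDirKReal_pos hu0 hu1).le) (min_le_right (n * r ^ 2) _)
    set c := √(t / ‖z‖ ^ 2)
    have hc1 : c ≤ 1 := Real.sqrt_le_one.2 ((div_le_one hu0).2 htu)
    have hc2 : c ^ 2 * ‖z‖ ^ 2 = t := by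
      rw [Real.sq_sqrt (by positivity), div_mul_cancel₀ t hu0.ne']
    have hw : ‖(c : ℂ) * z‖ ^ 2 = t := by
      rw [norm_mul, norm_real, Real.norm_of_nonneg (Real.sqrt_nonneg _), mul_pow, hc2]
    have hwball : (c : ℂ) * z ∈ ball (0 : ℂ) 1 := by
      rw [mem_ball_zero_iff, ← sq_lt_one_iff₀ (norm_nonneg _), hw]
      exact htu.trans_lt hu1
    have hδ : dirDelta z (c * z) ≤ r := by
      refine (dirDelta_ofReal_mul_le hR (Real.sqrt_nonneg _) hc1).trans ?_
      rw [hc2, ht, Real.sqrt_le_left hr]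
      push_cast at hn
      rcases min_cases ((n : ℝ) * r ^ 2) (logDirKReal (‖z‖ ^ 2)) with ⟨h, -⟩ | ⟨h, -⟩ <;>
        rw [h] <;> nlinarith
    have hfw := ih hwball (by rw [hw, ht]; exact min_le_left _ _)
    have hfz := one_sub_sq_mul_le_of_pseudoHyp_le (hmap z hz) (hmap _ hwball) (by norm_num)
      (hstep z hz _ hwball hδ)
    calc (3 / 16 : ℝ) ^ (n + 1) = 3 / 16 * (3 / 16) ^ n := pow_succ' _ _
      _ ≤ 3 / 16 * (1 - ‖f (c * z)‖) := by gcongr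
      _ ≤ 1 - ‖f z‖ := by linarith

theorem exp_neg_three_le : Real.exp (-3) ≤ 3 / 16 := by
  have := Real.quadratic_le_exp_of_nonneg (x := 3) (by norm_num)
  rw [Real.exp_neg, inv_le_comm₀ (Real.exp_pos 3) (by norm_num)]
  linarith

theorem exp_neg_le_one_sub_of_le_mul_of_pow_le {L s a : ℝ} (hL : 1 ≤ L) (hs : 0 ≤ s)
    (hnear : a ≤ L * s)
    (hfar : ∀ n : ℕ, 4 * L ^ 2 * (1 + 2 * s) ≤ n → (3 / 16 : ℝ) ^ n ≤ 1 - a) :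
    Real.exp (-(54 * L ^ 3) * s) ≤ 1 - a := by
  have hL3 : L ≤ L ^ 3 := le_self_pow₀ hL (by norm_num)
  have hL2 : L ^ 2 ≤ L ^ 3 := pow_le_pow_right₀ hL (by norm_num)
  have hLs : 0 ≤ L * s := by positivity
  rcases le_or_gt (2 * L * s) 1 with hsmall | hlarge
  · calc Real.exp (-(54 * L ^ 3) * s) ≤ Real.exp (-(2 * L * s)) :=
          Real.exp_le_exp.2 (by nlinarith)
      _ ≤ (1 + 2 * L * s)⁻¹ := by
          rw [Real.exp_neg]
          exact inv_anti₀ (by positivity) (by linarith [Real.add_one_le_exp (2 * L * s)])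
      _ ≤ 1 - L * s := by
          rw [inv_le_iff_one_le_mul₀ (by positivity)]
          nlinarith
      _ ≤ 1 - a := by linarith
  · set n := ⌈4 * L ^ 2 * (1 + 2 * s)⌉₊
    have hn : (n : ℝ) < 4 * L ^ 2 * (1 + 2 * s) + 1 := Nat.ceil_lt_add_one (by positivity)
    calc Real.exp (-(54 * L ^ 3) * s) ≤ Real.exp (n * -3) :=
          Real.exp_le_exp.2 (by nlinarith [mul_le_mul_of_nonneg_right hL2 hs])
      _ = Real.exp (-3) ^ n := Real.exp_nat_mul _ _
      _ ≤ (3 / 16) ^ n := pow_le_pow_left₀ (Real.exp_nonneg _) exp_neg_three_le n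
      _ ≤ 1 - a := hfar n (Nat.le_ceil _)

/-- If `f : 𝔻 → 𝔹_d` is Lipschitz from the Dirichlet metric to the pseudohyperbolic metric
with `f(0) = 0`, then there is `C ∈ (0,∞)` with
`‖f(z)‖ ≤ 1 − exp(−C·(log(1/(1−|z|)))^{1/2})` for all `z ∈ 𝔻`. -/
theorem lipschitz_slow_growth (d : ℕ) (f : ℂ → EuclideanSpace ℂ (Fin d)) (L : ℝ)
    (hmap : ∀ z ∈ ball (0 : ℂ) 1, ‖f z‖ < 1) (h0 : f 0 = 0)
    (hLip : ∀ z ∈ ball (0 : ℂ) 1, ∀ w ∈ ball (0 : ℂ) 1,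
      pseudoHyp (f z) (f w) ≤ L * dirDelta z w) :
    ∃ C : ℝ, 0 < C ∧ ∀ z ∈ ball (0 : ℂ) 1,
      ‖f z‖ ≤ 1 - Real.exp (-C * Real.sqrt (Real.log (1 / (1 - ‖z‖)))) := by
  obtain ⟨M, hM, hLipM⟩ : ∃ M : ℝ, 1 ≤ M ∧ ∀ z ∈ ball (0 : ℂ) 1, ∀ w ∈ ball (0 : ℂ) 1,
      pseudoHyp (f z) (f w) ≤ M * dirDelta z w :=
    ⟨max L 1, le_max_right _ _, fun z hz w hw =>
      (hLip z hz w hw).trans (by gcongr; exacts [Real.sqrt_nonneg _, le_max_left _ _])⟩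
  have hstep : ∀ z ∈ ball (0 : ℂ) 1, ∀ w ∈ ball (0 : ℂ) 1,
      dirDelta z w ≤ 1 / (2 * M) → pseudoHyp (f z) (f w) ≤ 1 / 2 := fun z hz w hw h =>
    calc pseudoHyp (f z) (f w) ≤ M * (1 / (2 * M)) := (hLipM z hz w hw).trans (by gcongr)
      _ = 1 / 2 := by field_simp
  refine ⟨54 * M ^ 3, by positivity, fun z hz => ?_⟩
  have hR : ‖z‖ < 1 := mem_ball_zero_iff.1 hz
  have hnear : ‖f z‖ ≤ M * √(Real.log (1 / (1 - ‖z‖))) :=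
    calc ‖f z‖ = pseudoHyp (f z) (f ((0 : ℝ) * z)) := by simp [h0, pseudoHyp_zero_right]
      _ ≤ M * √(logDirKReal (‖z‖ ^ 2)) := by
          refine (hLipM z hz _ (by simp)).trans ?_
          gcongr
          simpa [logDirKReal_zero] using dirDelta_ofReal_mul_le hR le_rfl zero_le_one
      _ ≤ M * √(Real.log (1 / (1 - ‖z‖))) := by
          gcongr; exact logDirKReal_sq_le_log (norm_nonneg z) hR
  refine le_sub_comm.1
    (exp_neg_le_one_sub_of_le_mul_of_pow_le hM (Real.sqrt_nonneg _) hnear fun n hn => ?_)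
  refine pow_le_one_sub_norm_of_logDirKReal_le (by positivity) hmap h0 hstep n hz ?_
  calc logDirKReal (‖z‖ ^ 2) ≤ 1 + 2 * √(Real.log (1 / (1 - ‖z‖))) :=
        logDirKReal_sq_le_one_add (norm_nonneg z) hR
    _ ≤ n * (1 / (2 * M)) ^ 2 := by
        rw [div_pow, one_pow, mul_one_div, le_div_iff₀ (by positivity)]
        linarith
end

section
/- Let d ∈ ℕ and let f : 𝔻 → 𝔹_d satisfy f(0) = 0 and ρ(f(z), f(w)) ≤ L·δ(z,w) for all z,w ∈ 𝔻 and some constant L < ∞. Then for every α > 0 there exists r₀ ∈ (0,1) such that ‖f(z)‖ ≤ 1 − (1−|z|)^α for all z ∈ 𝔻 with |z| ≥ r₀. -/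
open Complex Metric

/-!
Write `A(v) = log (1 / (1 - v))`. On a ray `{x ω : 0 ≤ x < 1}`, `|ω| = 1`, the Dirichlet kernel is
`k(xω, yω) = A(xy) / (xy)`, which gives `δ(xω, yω)² ≤ 1 - A(x²) / A(y²)` for `x ≤ y`, and
`δ(0, w) ≤ |w|`. Choose `λ > 1` with `|L| √(1 - 1/λ) ≤ 1/2`. Points of the ray whose `A`-values differ
by the factor `λ` are then mapped to points at pseudohyperbolic distance `≤ 1/2`, and
`ρ(a, b) ≤ 1/2` forces `1 - ‖a‖ ≤ 3 (1 - ‖b‖)`. Walking from `0` to `z` in such steps takes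
`O(log A(|z|²)) = O(log log (1 / (1 - |z|)))` steps, so `1 - ‖f z‖` is bounded below by a power of
`log (1 / (1 - |z|))`, which eventually dominates `(1 - |z|)^α`.
-/

open Filter Topology Set

lemma neg_log_one_sub_pos {v : ℝ} (h0 : 0 < v) (h1 : v < 1) : 0 < -Real.log (1 - v) :=
  neg_pos.mpr (Real.log_neg (by linarith) (by linarith))

lemma dirK_eq_of_mul_conj_eq_ofReal {z w : ℂ} {c : ℝ} (h : z * (starRingEnd ℂ) w = c)
    (hc0 : c ≠ 0) (hc1 : c < 1) : dirK z w = ((-Real.log (1 - c) / c : ℝ) : ℂ) := by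
  have hlog : Complex.log (1 / (1 - (c : ℂ))) = ((-Real.log (1 - c) : ℝ) : ℂ) := by
    rw [← Real.log_inv, Complex.ofReal_log (inv_nonneg.mpr (by linarith))]
    push_cast
    rw [one_div]
  rw [dirK, h, if_neg (by exact_mod_cast hc0), hlog]
  push_cast
  ring

lemma dirK_zero_left (w : ℂ) : dirK 0 w = 1 := by
  simp [dirK]

lemma dirDelta_zero_le_norm {w : ℂ} (hw : ‖w‖ < 1) : dirDelta 0 w ≤ ‖w‖ := by
  rcases eq_or_ne w 0 with rfl | hw0
  · simp [dirDelta, dirK_zero_left]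
  set s := ‖w‖ ^ 2 with hs
  have hs0 : 0 < s := by positivity
  have hs1 : s < 1 := by nlinarith [norm_nonneg w]
  have hA := neg_log_one_sub_pos hs0 hs1
  have hAle : -Real.log (1 - s) * (1 - s) ≤ s := by
    have h1s : 1 - s ≠ 0 := by linarith
    have hlog := Real.log_le_sub_one_of_pos (inv_pos.mpr (show 0 < 1 - s by linarith))
    rw [Real.log_inv, show (1 - s)⁻¹ - 1 = s / (1 - s) by field_simp; ring,
      le_div_iff₀ (by linarith)] at hlog
    exact hlog
  have hww : w * (starRingEnd ℂ) w = (s : ℂ) := by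
    rw [Complex.mul_conj, Complex.normSq_eq_norm_sq]
  rw [dirDelta, dirK_zero_left, dirK_zero_left, dirK_eq_of_mul_conj_eq_ofReal hww hs0.ne' hs1,
    ← Real.sqrt_sq (norm_nonneg w)]
  apply Real.sqrt_le_sqrt
  simp only [norm_one, one_pow, Complex.one_re, Complex.ofReal_re, one_mul]
  rw [← hs, sub_le_comm, one_div_div, le_div_iff₀ hA]
  linarith

lemma dirDelta_ofReal_mul_le_s2 {ω : ℂ} (hω : ‖ω‖ = 1) {x y : ℝ} (hx : 0 < x) (hxy : x ≤ y)
    (hy : y < 1) :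
    dirDelta (x * ω) (y * ω) ≤ √(1 - Real.log (1 - x ^ 2) / Real.log (1 - y ^ 2)) := by
  have hray : ∀ s t : ℝ, (s * ω) * (starRingEnd ℂ) (t * ω) = ((s * t : ℝ) : ℂ) := by
    intro s t
    rw [map_mul, Complex.conj_ofReal, show (s * ω) * (t * (starRingEnd ℂ) ω)
      = (s * t) * (ω * (starRingEnd ℂ) ω) by ring, Complex.mul_conj, Complex.normSq_eq_norm_sq,
      hω]
    push_cast; ring
  have hxx : x * x = x ^ 2 := by ring
  have hyy : y * y = y ^ 2 := by ring
  have hy0 : 0 < y := hx.trans_le hxy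
  have hxy1 : x * y < 1 := by nlinarith
  have hx1 : x ^ 2 < 1 := by nlinarith
  have hy1 : y ^ 2 < 1 := by nlinarith
  rw [dirDelta, dirK_eq_of_mul_conj_eq_ofReal (hray x y) (by positivity) hxy1,
    dirK_eq_of_mul_conj_eq_ofReal (hray x x) (by positivity) (by nlinarith),
    dirK_eq_of_mul_conj_eq_ofReal (hray y y) (by positivity) (by nlinarith),
    Complex.ofReal_re, Complex.ofReal_re, Complex.norm_real, Real.norm_eq_abs, sq_abs, hxx, hyy]
  apply Real.sqrt_le_sqrt
  set p := -Real.log (1 - x ^ 2)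
  set q := -Real.log (1 - y ^ 2)
  set m := -Real.log (1 - x * y)
  have hp : 0 < p := neg_log_one_sub_pos (by positivity) hx1
  have hq : 0 < q := neg_log_one_sub_pos (by positivity) hy1
  have hpm : p ≤ m := neg_le_neg (Real.log_le_log (by linarith) (by nlinarith))
  have hkey : (m / (x * y)) ^ 2 / (p / x ^ 2 * (q / y ^ 2)) = m ^ 2 / (p * q) := by
    field_simp
  rw [hkey, show Real.log (1 - x ^ 2) / Real.log (1 - y ^ 2) = p / q by
    simp only [p, q, neg_div_neg_eq]]
  rw [sub_le_sub_iff_left, div_le_div_iff₀ hq (by positivity)]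
  nlinarith [mul_le_mul hpm hpm hp.le (hp.le.trans hpm)]

lemma one_sub_norm_mul_norm_le_norm_one_sub_inner {E : Type*} [NormedAddCommGroup E]
    [InnerProductSpace ℂ E] (a b : E) : 1 - ‖a‖ * ‖b‖ ≤ ‖1 - (inner ℂ b a : ℂ)‖ :=
  calc 1 - ‖a‖ * ‖b‖ ≤ 1 - (inner ℂ b a : ℂ).re := by
        linarith [Complex.re_le_norm (inner ℂ b a), norm_inner_le_norm (𝕜 := ℂ) b a]
    _ = (1 - (inner ℂ b a : ℂ)).re := by simp
    _ ≤ ‖1 - (inner ℂ b a : ℂ)‖ := Complex.re_le_norm _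

lemma one_sub_le_three_mul_one_sub {x y : ℝ} (hx : 0 ≤ x) (hx1 : x < 1) (hy1 : y < 1)
    (h : 3 / 4 * (1 - x * y) ^ 2 ≤ (1 - x ^ 2) * (1 - y ^ 2)) :
    1 - x ≤ 3 * (1 - y) := by
  -- `h` says that the real pseudohyperbolic distance `(y - x) / (1 - x y)` is at most `1 / 2`
  have hxy : 2 * (y - x) ≤ 1 - x * y :=
    le_of_sq_le_sq (by nlinarith) (by nlinarith)
  nlinarith

lemma one_sub_norm_le_three_mul_of_pseudoHyp_le_half {d : ℕ} {a b : EuclideanSpace ℂ (Fin d)}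
    (ha : ‖a‖ < 1) (hb : ‖b‖ < 1) (h : pseudoHyp a b ≤ 1 / 2) : 1 - ‖a‖ ≤ 3 * (1 - ‖b‖) := by
  apply one_sub_le_three_mul_one_sub (norm_nonneg a) ha hb
  have hc := one_sub_norm_mul_norm_le_norm_one_sub_inner a b
  have hab : 0 < 1 - ‖a‖ * ‖b‖ := by nlinarith [norm_nonneg a, norm_nonneg b]
  have hq : 1 - (1 - ‖a‖ ^ 2) * (1 - ‖b‖ ^ 2) / ‖1 - (inner ℂ b a : ℂ)‖ ^ 2 ≤ 1 / 4 := by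
    rw [pseudoHyp, Real.sqrt_le_left (by norm_num)] at h
    linarith
  have h34 : 3 / 4 * ‖1 - (inner ℂ b a : ℂ)‖ ^ 2 ≤ (1 - ‖a‖ ^ 2) * (1 - ‖b‖ ^ 2) :=
    (le_div_iff₀ (by nlinarith)).mp (by linarith)
  nlinarith [pow_le_pow_left₀ hab.le hc 2]

/-- The point `x ω`, `x ≥ 0`, with `-log (1 - x²) = a`. -/
noncomputable def rayPoint (ω : ℂ) (a : ℝ) : ℂ := ((√(1 - Real.exp (-a)) : ℝ) : ℂ) * ω

section rayPoint

variable {ω : ℂ}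

lemma norm_rayPoint (hω : ‖ω‖ = 1) (a : ℝ) : ‖rayPoint ω a‖ = √(1 - Real.exp (-a)) := by
  rw [rayPoint, norm_mul, hω, mul_one, Complex.norm_real, Real.norm_eq_abs,
    abs_of_nonneg (Real.sqrt_nonneg _)]

lemma rayPoint_mem_ball (hω : ‖ω‖ = 1) (a : ℝ) : rayPoint ω a ∈ ball (0 : ℂ) 1 := by
  rw [mem_ball_zero_iff, norm_rayPoint hω, Real.sqrt_lt' one_pos]
  linarith [Real.exp_pos (-a)]

lemma dirDelta_rayPoint_le (hω : ‖ω‖ = 1) {a b : ℝ} (ha : 0 < a) (hab : a ≤ b) :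
    dirDelta (rayPoint ω a) (rayPoint ω b) ≤ √(1 - a / b) := by
  have hlog : ∀ t : ℝ, 0 ≤ t → Real.log (1 - √(1 - Real.exp (-t)) ^ 2) = -t := fun t ht => by
    rw [Real.sq_sqrt (by linarith [Real.exp_le_one_iff.mpr (neg_nonpos.mpr ht)]), sub_sub_cancel,
      Real.log_exp]
  have := dirDelta_ofReal_mul_le_s2 hω (x := √(1 - Real.exp (-a))) (y := √(1 - Real.exp (-b)))
    (Real.sqrt_pos.mpr (by linarith [Real.exp_lt_one_iff.mpr (neg_lt_zero.mpr ha)]))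
    (Real.sqrt_le_sqrt (by linarith [Real.exp_le_exp.mpr (neg_le_neg hab)]))
    ((Real.sqrt_lt' one_pos).mpr (by linarith [Real.exp_pos (-b)]))
  rwa [hlog a ha.le, hlog b (ha.le.trans hab), neg_div_neg_eq] at this

end rayPoint

lemma rayPoint_div_norm {z : ℂ} (hz0 : z ≠ 0) (hz1 : ‖z‖ < 1) :
    rayPoint (z / ‖z‖) (-Real.log (1 - ‖z‖ ^ 2)) = z := by
  have h1 : 0 < 1 - ‖z‖ ^ 2 := by nlinarith [norm_nonneg z]
  rw [rayPoint, neg_neg, Real.exp_log h1, sub_sub_cancel, Real.sqrt_sq (norm_nonneg z),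
    mul_div_cancel₀ _ (by exact_mod_cast norm_ne_zero_iff.mpr hz0)]

lemma pow_mul_le_of_forall_le_div {h : ℝ → ℝ} {A b c lam : ℝ} (hc : 0 ≤ c) (hlam : 0 < lam)
    (hbase : ∀ a ∈ Ioc 0 A, b ≤ h a) (hstep : ∀ a, 0 < a → c * h (a / lam) ≤ h a) :
    ∀ n : ℕ, ∀ a ∈ Ioc 0 (A * lam ^ n), c ^ n * b ≤ h a
  | 0, a, ha => by simpa using hbase a (by simpa using ha)
  | n + 1, a, ⟨ha0, ha⟩ => by
    have hdiv : a / lam ∈ Ioc 0 (A * lam ^ n) :=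
      ⟨div_pos ha0 hlam, (div_le_iff₀ hlam).mpr (by rwa [mul_assoc, ← pow_succ])⟩
    calc c ^ (n + 1) * b = c * (c ^ n * b) := by ring
      _ ≤ c * h (a / lam) := mul_le_mul_of_nonneg_left
          (pow_mul_le_of_forall_le_div hc hlam hbase hstep n _ hdiv) hc
      _ ≤ h a := hstep a ha0

lemma pow_mul_le_rayPoint {g : ℂ → ℝ} {c lam : ℝ} (hc : 0 ≤ c) (hlam : 1 < lam)
    (hg : ∀ w₁ ∈ ball (0 : ℂ) 1, ∀ w₂ ∈ ball (0 : ℂ) 1,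
      dirDelta w₁ w₂ ≤ √(1 - lam⁻¹) → c * g w₁ ≤ g w₂)
    {ω : ℂ} (hω : ‖ω‖ = 1) (n : ℕ) :
    ∀ a ∈ Ioc 0 (Real.log lam * lam ^ n), c ^ n * (c * g 0) ≤ g (rayPoint ω a) := by
  have hlam0 : 0 < lam := one_pos.trans hlam
  refine pow_mul_le_of_forall_le_div hc hlam0 (fun a ha => ?_) (fun a ha => ?_) n
  · refine hg 0 (mem_ball_self one_pos) _ (rayPoint_mem_ball hω a) ?_
    calc dirDelta 0 (rayPoint ω a) ≤ ‖rayPoint ω a‖ :=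
          dirDelta_zero_le_norm (mem_ball_zero_iff.mp (rayPoint_mem_ball hω a))
      _ ≤ √(1 - lam⁻¹) := by
          rw [norm_rayPoint hω]
          refine Real.sqrt_le_sqrt (sub_le_sub_left ?_ 1)
          rw [← Real.exp_log hlam0, ← Real.exp_neg]
          exact Real.exp_le_exp.mpr (neg_le_neg ha.2)
  · refine hg _ (rayPoint_mem_ball hω _) _ (rayPoint_mem_ball hω a) ?_
    calc dirDelta (rayPoint ω (a / lam)) (rayPoint ω a) ≤ √(1 - a / lam / a) :=
          dirDelta_rayPoint_le hω (div_pos ha hlam0) (div_le_self ha.le hlam.le)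
      _ = √(1 - lam⁻¹) := by rw [div_div_cancel_left' ha.ne']

lemma exists_one_lt_mul_sqrt_one_sub_inv_lt (K : ℝ) {ε : ℝ} (hε : 0 < ε) :
    ∃ lam > 1, K * √(1 - lam⁻¹) < ε := by
  have hcont : ContinuousAt (fun l : ℝ => K * √(1 - l⁻¹)) 1 := by
    fun_prop (disch := norm_num)
  have hlim : Tendsto (fun l : ℝ => K * √(1 - l⁻¹)) (𝓝[>] 1) (𝓝 0) := by
    simpa using hcont.tendsto.mono_left nhdsWithin_le_nhds
  obtain ⟨l, hl, hl1⟩ := ((hlim.eventually (gt_mem_nhds hε)).and self_mem_nhdsWithin).exists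
  exact ⟨l, hl1, hl⟩

lemma tendsto_neg_log_one_sub_nhdsLT_one :
    Tendsto (fun r : ℝ => -Real.log (1 - r)) (𝓝[<] 1) atTop := by
  have h : Tendsto (fun r : ℝ => 1 - r) (𝓝[<] 1) (𝓝[>] 0) := by
    refine tendsto_nhdsWithin_iff.mpr ⟨?_, eventually_nhdsWithin_of_forall fun r hr => ?_⟩
    · have hc : ContinuousAt (fun r : ℝ => 1 - r) 1 := by fun_prop
      simpa using hc.tendsto.mono_left nhdsWithin_le_nhds
    · exact sub_pos.mpr (mem_Iio.mp hr)
  exact tendsto_neg_atBot_atTop.comp (Real.tendsto_log_nhdsGT_zero.comp h)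

lemma exists_mem_Ioo_forall_of_eventually_nhdsLT_one {P : ℝ → Prop}
    (h : ∀ᶠ r in 𝓝[<] (1 : ℝ), P r) : ∃ r₀ ∈ Ioo (0 : ℝ) 1, ∀ r, r₀ ≤ r → r < 1 → P r := by
  obtain ⟨l, hl, hsub⟩ := mem_nhdsLT_iff_exists_Ico_subset.mp h
  exact ⟨max l (1 / 2), ⟨by positivity, max_lt hl (by norm_num)⟩,
    fun r hr hr1 => hsub ⟨(le_max_left _ _).trans hr, hr1⟩⟩

lemma eventually_exists_le_mul_pow_and_exp_le {A lam α c b : ℝ} (hA : 0 < A) (hlam : 1 < lam)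
    (hα : 0 < α) (hc : 0 < c) (hb : 0 < b) :
    ∀ᶠ X in atTop, ∃ n : ℕ, X ≤ A * lam ^ n ∧ Real.exp (-(α * X)) ≤ c ^ n * b := by
  set ℓ := Real.log lam
  set k := |Real.log c|
  have hℓ : 0 < ℓ := Real.log_pos hlam
  have hkℓ : 0 ≤ k / ℓ := by positivity
  have hlog : ∀ᶠ X in atTop, ‖k / ℓ * Real.log X‖ ≤ α / 2 * ‖X‖ :=
    (Real.isLittleO_log_id_atTop.const_mul_left (k / ℓ)).def (by positivity)
  filter_upwards [hlog, eventually_ge_atTop A,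
    eventually_ge_atTop (2 * (k / ℓ * |Real.log A| + k - Real.log b) / α)] with X hlogX hAX hKX
  have hX : 0 < X := hA.trans_le hAX
  -- the least `n` with `X ≤ A * lam ^ n`; it grows only like `log X`
  set n := ⌈Real.log (X / A) / ℓ⌉₊
  have hn_ge : Real.log (X / A) ≤ n * ℓ := (div_le_iff₀ hℓ).mp (Nat.le_ceil _)
  have hn_lt : (n : ℝ) < Real.log (X / A) / ℓ + 1 :=
    Nat.ceil_lt_add_one (div_nonneg (Real.log_nonneg ((one_le_div hA).mpr hAX)) hℓ.le)
  refine ⟨n, ?_, ?_⟩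
  · have : X / A ≤ lam ^ n := by
      rwa [← Real.log_le_log_iff (div_pos hX hA) (by positivity), Real.log_pow]
    rwa [div_le_iff₀' hA] at this
  · rw [← Real.exp_log (by positivity : 0 < c ^ n * b), Real.log_mul (by positivity) hb.ne',
      Real.log_pow]
    apply Real.exp_le_exp.mpr
    simp only [norm_mul, Real.norm_eq_abs, abs_of_nonneg hkℓ, abs_of_pos hX] at hlogX
    have h1 : -(n * k) ≤ n * Real.log c := by
      rw [← mul_neg]; exact mul_le_mul_of_nonneg_left (neg_abs_le _) (Nat.cast_nonneg n)
    have h2 : n * k ≤ (Real.log (X / A) / ℓ + 1) * k :=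
      mul_le_mul_of_nonneg_right hn_lt.le (abs_nonneg _)
    have h3 : Real.log (X / A) / ℓ * k ≤ k / ℓ * |Real.log X| + k / ℓ * |Real.log A| := by
      rw [Real.log_div hX.ne' hA.ne', div_mul_comm, ← mul_add]
      have := le_abs_self (Real.log X)
      have := neg_abs_le (Real.log A)
      exact mul_le_mul_of_nonneg_left (by linarith) hkℓ
    have h4 := (div_le_iff₀ hα).mp hKX
    nlinarith

lemma neg_log_one_sub_sq_le {r : ℝ} (hr0 : 0 ≤ r) (hr1 : r < 1) :
    -Real.log (1 - r ^ 2) ≤ -Real.log (1 - r) :=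
  neg_le_neg (Real.log_le_log (by linarith) (by nlinarith))

lemma one_sub_norm_le_three_mul_of_dirDelta_le {d : ℕ} {f : ℂ → EuclideanSpace ℂ (Fin d)}
    {L η : ℝ} (hLη : |L| * η ≤ 1 / 2) (hmap : ∀ z ∈ ball (0 : ℂ) 1, ‖f z‖ < 1)
    (hLip : ∀ z ∈ ball (0 : ℂ) 1, ∀ w ∈ ball (0 : ℂ) 1, pseudoHyp (f z) (f w) ≤ L * dirDelta z w)
    {w₁ w₂ : ℂ} (hw₁ : w₁ ∈ ball (0 : ℂ) 1) (hw₂ : w₂ ∈ ball (0 : ℂ) 1)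
    (hδ : dirDelta w₁ w₂ ≤ η) : 1 - ‖f w₁‖ ≤ 3 * (1 - ‖f w₂‖) := by
  refine one_sub_norm_le_three_mul_of_pseudoHyp_le_half (hmap w₁ hw₁) (hmap w₂ hw₂) ?_
  calc pseudoHyp (f w₁) (f w₂) ≤ L * dirDelta w₁ w₂ := hLip w₁ hw₁ w₂ hw₂
    _ ≤ |L| * η := mul_le_mul (le_abs_self L) hδ (Real.sqrt_nonneg _) (abs_nonneg L)
    _ ≤ 1 / 2 := hLη

/-- If `f : 𝔻 → 𝔹_d` with `f(0) = 0` is Lipschitz from the Dirichlet metric to the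
pseudohyperbolic metric, then for every `α > 0` there is `r₀ ∈ (0,1)` such that
`‖f(z)‖ ≤ 1 − (1−|z|)^α` whenever `|z| ≥ r₀`. -/
theorem lipschitz_power_growth (d : ℕ) (f : ℂ → EuclideanSpace ℂ (Fin d)) (L : ℝ)
    (hmap : ∀ z ∈ ball (0 : ℂ) 1, ‖f z‖ < 1) (h0 : f 0 = 0)
    (hLip : ∀ z ∈ ball (0 : ℂ) 1, ∀ w ∈ ball (0 : ℂ) 1,
      pseudoHyp (f z) (f w) ≤ L * dirDelta z w) :
    ∀ α : ℝ, 0 < α → ∃ r₀ ∈ Set.Ioo (0 : ℝ) 1, ∀ z ∈ ball (0 : ℂ) 1,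
      r₀ ≤ ‖z‖ → ‖f z‖ ≤ 1 - (1 - ‖z‖) ^ α := by
  intro α hα
  obtain ⟨lam, hlam, hLlam⟩ := exists_one_lt_mul_sqrt_one_sub_inv_lt |L| one_half_pos
  have hg : ∀ w₁ ∈ ball (0 : ℂ) 1, ∀ w₂ ∈ ball (0 : ℂ) 1, dirDelta w₁ w₂ ≤ √(1 - lam⁻¹) →
      3⁻¹ * (1 - ‖f w₁‖) ≤ 1 - ‖f w₂‖ := fun w₁ hw₁ w₂ hw₂ hδ => by
    linarith [one_sub_norm_le_three_mul_of_dirDelta_le hLlam.le hmap hLip hw₁ hw₂ hδ]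
  obtain ⟨r₀, hr₀, hfar⟩ := exists_mem_Ioo_forall_of_eventually_nhdsLT_one
    (tendsto_neg_log_one_sub_nhdsLT_one.eventually (eventually_exists_le_mul_pow_and_exp_le
      (Real.log_pos hlam) hlam hα (c := 3⁻¹) (b := 3⁻¹ * (1 - ‖f 0‖)) (by norm_num) (by simp [h0])))
  refine ⟨r₀, hr₀, fun z hz hzr => ?_⟩
  have hz1 : ‖z‖ < 1 := mem_ball_zero_iff.mp hz
  have hz0 : z ≠ 0 := norm_pos_iff.mp (hr₀.1.trans_le hzr)
  obtain ⟨n, hXn, hexp⟩ := hfar ‖z‖ hzr hz1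
  have ha : -Real.log (1 - ‖z‖ ^ 2) ∈ Ioc 0 (Real.log lam * lam ^ n) :=
    ⟨neg_log_one_sub_pos (by positivity) (by nlinarith [norm_nonneg z]),
      (neg_log_one_sub_sq_le (norm_nonneg z) hz1).trans hXn⟩
  have hω : ‖z / (‖z‖ : ℂ)‖ = 1 := by
    rw [norm_div, Complex.norm_real, norm_norm, div_self (norm_ne_zero_iff.mpr hz0)]
  have hray := pow_mul_le_rayPoint (by norm_num) hlam hg hω n _ ha
  rw [rayPoint_div_norm hz0 hz1] at hray
  rw [Real.rpow_def_of_pos (by linarith), show Real.log (1 - ‖z‖) * α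
    = -(α * -Real.log (1 - ‖z‖)) by ring]
  linarith
end

section
/- There exists a constant M ∈ (0,∞) such that for every r ∈ [0,1), the curve γ_r : [0,r] → 𝔻, t ↦ t, satisfies ℓ_δ(γ_r) ≤ M·(log(1/(1−r)))^{1/2}, where ℓ_δ denotes length with respect to the Dirichlet metric δ. -/
open Complex Metric

/-- The length of a curve `γ : [a,b] → X` with respect to a pseudometric `d`:
the supremum over all partitions `a = t₀ < t₁ < … < tₙ = b` of
`Σ_{i=0}^{n−1} d(γ(tᵢ), γ(tᵢ₊₁))`. -/
noncomputable def curveLen {X : Type*} (d : X → X → ℝ) (a b : ℝ) (γ : ℝ → X) : ENNReal :=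
  sSup {L : ENNReal | ∃ (n : ℕ) (t : ℕ → ℝ), t 0 = a ∧ t n = b ∧
    (∀ i, i < n → t i < t (i + 1)) ∧
    L = ∑ i ∈ Finset.range n, ENNReal.ofReal (d (γ (t i)) (γ (t (i + 1))))}

/-!
Write `ℓ v = -log (1 - v)` (`negLogOneSub`) and, for `0 ≤ s ≤ t < 1`,
`a = ℓ(s²)`, `b = ℓ(t²)`, `u = ℓ(st)`.
Away from the origin `k(s,t) = ℓ(st)/(st)`, so `δ(s,t)² = 1 - u²/(ab)`. The key estimate is
`δ(s,t) ≤ 5 (√b - √a)`. Summed over a partition of `[0,r]` it telescopes to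
`5 √ℓ(r²) ≤ 5 √(log (1/(1-r)))`.

If `2a ≤ b`, then `δ² ≤ 1 - (1-s²)(1-t²) ≤ 2b ≤ 25 (√b - √a)²`. Otherwise, since
`1 - x² ≤ 2 (1 - x)`, it suffices to show `a + b - 2u ≤ (√b - √a)² (1 + 25 √(ab))`. When
`b - a ≥ 1/4` this follows from `a + b - 2u ≤ b - a`. When `b - a < 1/4` it follows from
`a + b - 2u ≤ (t-s)²/((1-s²)(1-t²))` and `t² - s² ≤ (b - a)(1 - s²)`.
-/
theorem curveLen_le_of_le_sub {X : Type*} {d : X → X → ℝ} {a b : ℝ} {γ : ℝ → X} {F : ℝ → ℝ}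
    (hd : ∀ x y, 0 ≤ d x y)
    (h : ∀ s t, a ≤ s → s ≤ t → t ≤ b → d (γ s) (γ t) ≤ F t - F s) :
    curveLen d a b γ ≤ ENNReal.ofReal (F b - F a) := by
  refine sSup_le ?_
  rintro _ ⟨n, τ, rfl, rfl, hτ, rfl⟩
  have hmono : StrictMonoOn τ (Set.Iic n) := strictMonoOn_Iic_of_lt_succ hτ
  have hstep : ∀ i ∈ Finset.range n, d (γ (τ i)) (γ (τ (i + 1))) ≤ F (τ (i + 1)) - F (τ i) := by
    intro i hi
    have hi : i < n := Finset.mem_range.mp hi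
    exact h _ _ (hmono.monotoneOn (Set.mem_Iic.2 n.zero_le) (Set.mem_Iic.2 hi.le) i.zero_le)
      (hτ i hi).le (hmono.monotoneOn (Set.mem_Iic.2 hi) (Set.mem_Iic.2 le_rfl) hi)
  calc ∑ i ∈ Finset.range n, ENNReal.ofReal (d (γ (τ i)) (γ (τ (i + 1))))
      ≤ ∑ i ∈ Finset.range n, ENNReal.ofReal (F (τ (i + 1)) - F (τ i)) :=
        Finset.sum_le_sum fun i hi => ENNReal.ofReal_le_ofReal (hstep i hi)
    _ = ENNReal.ofReal (F (τ n) - F (τ 0)) := by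
        rw [← ENNReal.ofReal_sum_of_nonneg fun i hi => (hd _ _).trans (hstep i hi),
          Finset.sum_range_sub (fun i => F (τ i))]

noncomputable def negLogOneSub (v : ℝ) : ℝ := -Real.log (1 - v)

@[simp] lemma negLogOneSub_zero : negLogOneSub 0 = 0 := by simp [negLogOneSub]

lemma le_negLogOneSub {v : ℝ} (hv : v < 1) : v ≤ negLogOneSub v := by
  have := Real.log_le_sub_one_of_pos (sub_pos.2 hv)
  unfold negLogOneSub; linarith

lemma negLogOneSub_mul_one_sub_le {v : ℝ} (hv : v < 1) : negLogOneSub v * (1 - v) ≤ v := by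
  have h1 : 0 < 1 - v := sub_pos.2 hv
  have := Real.log_le_sub_one_of_pos (inv_pos.2 h1)
  rw [Real.log_inv] at this
  have h2 : ((1 - v)⁻¹ - 1) * (1 - v) = v := by field_simp; ring
  unfold negLogOneSub
  nlinarith

lemma negLogOneSub_le_negLogOneSub {v w : ℝ} (hvw : v ≤ w) (hw : w < 1) :
    negLogOneSub v ≤ negLogOneSub w :=
  neg_le_neg (Real.log_le_log (by linarith) (by linarith))

lemma sub_le_negLogOneSub_sub_mul {x y : ℝ} (hx : x < 1) (hy : y < 1) :
    y - x ≤ (negLogOneSub y - negLogOneSub x) * (1 - x) := by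
  have h1 : 0 < 1 - x := sub_pos.2 hx
  have := Real.log_le_sub_one_of_pos (div_pos (sub_pos.2 hy) h1)
  rw [Real.log_div (sub_pos.2 hy).ne' h1.ne', le_sub_iff_add_le, le_div_iff₀ h1] at this
  unfold negLogOneSub
  nlinarith

/-- The left side is `log (1 + W)` for the right side `W`, as
`(1 - st)² - (1 - s²)(1 - t²) = (t - s)²`. -/
lemma negLogOneSub_add_sub_two_mul_le {s t : ℝ} (hs : s * s < 1) (ht : t * t < 1) :
    negLogOneSub (s * s) + negLogOneSub (t * t) - 2 * negLogOneSub (s * t)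
      ≤ (t - s) ^ 2 / ((1 - s * s) * (1 - t * t)) := by
  have hss : 0 < 1 - s * s := sub_pos.2 hs
  have htt : 0 < 1 - t * t := sub_pos.2 ht
  have hst : 0 < 1 - s * t := by nlinarith [sq_nonneg (s - t)]
  have hP : 0 < (1 - s * s) * (1 - t * t) := mul_pos hss htt
  have := Real.log_le_sub_one_of_pos (div_pos (pow_pos hst 2) hP)
  rw [Real.log_div (pow_pos hst 2).ne' hP.ne', Real.log_mul hss.ne' htt.ne', Real.log_pow] at this
  have hW : (1 - s * t) ^ 2 / ((1 - s * s) * (1 - t * t)) - 1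
      = (t - s) ^ 2 / ((1 - s * s) * (1 - t * t)) := by
    rw [div_sub_one hP.ne']; ring_nf
  unfold negLogOneSub
  push_cast at this
  linarith

noncomputable def dirKProfile (v : ℝ) : ℝ := if v = 0 then 1 else negLogOneSub v / v

lemma dirK_ofReal {s t : ℝ} (h : s * t < 1) : dirK s t = dirKProfile (s * t) := by
  unfold dirK dirKProfile
  rw [Complex.conj_ofReal, ← Complex.ofReal_mul]
  by_cases hst : s * t = 0
  · simp [hst]
  · have hlog : Complex.log (1 / (1 - ((s * t : ℝ) : ℂ))) = (negLogOneSub (s * t) : ℂ) := by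
      rw [← Complex.ofReal_one, ← Complex.ofReal_sub, ← Complex.ofReal_div,
        ← Complex.ofReal_log (one_div_pos.2 (sub_pos.2 h)).le, one_div, Real.log_inv]
      rfl
    rw [if_neg (by exact_mod_cast hst), if_neg hst, hlog]
    push_cast
    ring

lemma dirDelta_nonneg (z w : ℂ) : 0 ≤ dirDelta z w := Real.sqrt_nonneg _

lemma dirDelta_ofReal {s t : ℝ} (hs : |s| < 1) (ht : |t| < 1) :
    dirDelta s t = √(1 - dirKProfile (s * t) ^ 2 /
      (dirKProfile (s * s) * dirKProfile (t * t))) := by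
  have hst : s * t < 1 := by
    calc s * t ≤ |s| * |t| := by rw [← abs_mul]; exact le_abs_self _
      _ < 1 := by nlinarith [abs_nonneg s, abs_nonneg t]
  have hss : s * s < 1 := by nlinarith [abs_mul_abs_self s, abs_nonneg s]
  have htt : t * t < 1 := by nlinarith [abs_mul_abs_self t, abs_nonneg t]
  unfold dirDelta
  rw [dirK_ofReal hst, dirK_ofReal hss, dirK_ofReal htt]
  simp [Complex.norm_real, sq_abs]

lemma one_le_dirKProfile {v : ℝ} (h0 : 0 ≤ v) (h1 : v < 1) : 1 ≤ dirKProfile v := by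
  unfold dirKProfile
  split_ifs with hv
  · rfl
  · exact (one_le_div (lt_of_le_of_ne h0 (Ne.symm hv))).2 (le_negLogOneSub h1)

lemma dirKProfile_mul_one_sub_le {v : ℝ} (h0 : 0 ≤ v) (h1 : v < 1) :
    dirKProfile v * (1 - v) ≤ 1 := by
  unfold dirKProfile
  split_ifs with hv
  · linarith
  · rw [div_mul_eq_mul_div, div_le_one (lt_of_le_of_ne h0 (Ne.symm hv))]
    exact negLogOneSub_mul_one_sub_le h1

lemma dirKProfile_ratio_of_pos {s t : ℝ} (hs : 0 < s) (ht : 0 < t) :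
    dirKProfile (s * t) ^ 2 / (dirKProfile (s * s) * dirKProfile (t * t))
      = negLogOneSub (s * t) ^ 2 / (negLogOneSub (s * s) * negLogOneSub (t * t)) := by
  simp only [dirKProfile, if_neg (mul_pos hs hs).ne', if_neg (mul_pos hs ht).ne',
    if_neg (mul_pos ht ht).ne']
  field_simp

lemma two_mul_sq_le_mul_sq_sub {A B : ℝ} (h : 2 * A ^ 2 ≤ B ^ 2) :
    2 * B ^ 2 ≤ 25 * (B - A) ^ 2 := by
  nlinarith [sq_nonneg (33 * B - 50 * A)]

lemma sq_sub_sq_le_of_quarter_le {A B : ℝ} (hA : 0 < A) (hAB : A ≤ B)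
    (hd : 1 / 4 ≤ B ^ 2 - A ^ 2) : B ^ 2 - A ^ 2 ≤ (B - A) ^ 2 * (1 + 25 * (A * B)) := by
  have hAB0 : 0 ≤ A * B := mul_nonneg hA.le (hA.le.trans hAB)
  have h : (B + A) * (B + A) ≤ (B + A) * ((B - A) * (1 + 25 * (A * B))) := by
    nlinarith [mul_le_mul_of_nonneg_right hd hAB0]
  calc B ^ 2 - A ^ 2 = (B - A) * (B + A) := by ring
    _ ≤ (B - A) * ((B - A) * (1 + 25 * (A * B))) :=
      mul_le_mul_of_nonneg_left (le_of_mul_le_mul_left h (by linarith)) (by linarith)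
    _ = (B - A) ^ 2 * (1 + 25 * (A * B)) := by ring

lemma one_add_sq_le_of_sq_sub_sq_lt_quarter {A B : ℝ} (hA : 0 < A) (hAB : A ≤ B)
    (hd : B ^ 2 - A ^ 2 < 1 / 4) (h2 : B ^ 2 < 2 * A ^ 2) :
    1 + B ^ 2 ≤ (1 - (B ^ 2 - A ^ 2)) * (1 + 25 * (A * B)) := by
  have hAA : A ^ 2 ≤ A * B := by nlinarith
  nlinarith [mul_le_mul_of_nonneg_right hd.le (mul_nonneg hA.le (hA.le.trans hAB))]

lemma sq_mul_sq_sub_sq_le {A B u : ℝ} (hAB : 0 ≤ A * B)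
    (h : A ^ 2 + B ^ 2 - 2 * u ≤ (B - A) ^ 2 * (1 + 25 * (A * B))) :
    A ^ 2 * B ^ 2 - u ^ 2 ≤ 25 * (B - A) ^ 2 * (A ^ 2 * B ^ 2) := by
  nlinarith [mul_le_mul_of_nonneg_left h hAB, sq_nonneg (A * B - u)]

section RealSegment

variable {s t : ℝ}

lemma sq_sqrt_add_sqrt_negLogOneSub_le (hs : 0 ≤ s) (hst : s ≤ t) (ht : t < 1) :
    (√(negLogOneSub (t * t)) + √(negLogOneSub (s * s))) ^ 2
      ≤ (1 + negLogOneSub (t * t)) * (s + t) ^ 2 := by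
  have hx : s * s < 1 := by nlinarith
  have hy : t * t < 1 := by nlinarith
  set a := negLogOneSub (s * s)
  set b := negLogOneSub (t * t)
  have ha0 : 0 ≤ a := (mul_self_nonneg s).trans (le_negLogOneSub hx)
  have hab : a ≤ b := negLogOneSub_le_negLogOneSub (by nlinarith) hy
  have hb0 : 0 ≤ b := ha0.trans hab
  have ht0 : 0 ≤ t := hs.trans hst
  have ha : a ≤ s * s * (1 + b) := by nlinarith [negLogOneSub_mul_one_sub_le hx]
  have hb : b ≤ t * t * (1 + b) := by nlinarith [negLogOneSub_mul_one_sub_le hy]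
  have hAB : √a * √b ≤ s * t * (1 + b) := by
    rw [← Real.sqrt_mul ha0, Real.sqrt_le_iff]
    refine ⟨by positivity, ?_⟩
    nlinarith [mul_le_mul ha hb hb0 (by positivity)]
  calc (√b + √a) ^ 2 = b + a + 2 * (√a * √b) := by
        rw [add_sq, Real.sq_sqrt hb0, Real.sq_sqrt ha0]; ring
    _ ≤ (1 + b) * (s + t) ^ 2 := by nlinarith

lemma negLogOneSub_add_sub_two_mul_le_of_sub_lt_quarter (hs : 0 < s) (hst : s ≤ t) (ht : t < 1)
    (h2 : negLogOneSub (t * t) < 2 * negLogOneSub (s * s))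
    (hd : negLogOneSub (t * t) - negLogOneSub (s * s) < 1 / 4) :
    negLogOneSub (s * s) + negLogOneSub (t * t) - 2 * negLogOneSub (s * t)
      ≤ (√(negLogOneSub (t * t)) - √(negLogOneSub (s * s))) ^ 2 *
        (1 + 25 * (√(negLogOneSub (s * s)) * √(negLogOneSub (t * t)))) := by
  have hx : s * s < 1 := by nlinarith
  have hy : t * t < 1 := by nlinarith
  have hW := negLogOneSub_add_sub_two_mul_le hx hy
  have hyx := sub_le_negLogOneSub_sub_mul hx hy
  have hBA := sq_sqrt_add_sqrt_negLogOneSub_le hs.le hst ht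
  set a := negLogOneSub (s * s)
  set b := negLogOneSub (t * t)
  set A := √a
  set B := √b
  have ha0 : 0 < a := (mul_pos hs hs).trans_le (le_negLogOneSub hx)
  have hab : a ≤ b := negLogOneSub_le_negLogOneSub (by nlinarith) hy
  have hA2 : A ^ 2 = a := Real.sq_sqrt ha0.le
  have hB2 : B ^ 2 = b := Real.sq_sqrt (ha0.le.trans hab)
  have hA0 : 0 < A := Real.sqrt_pos.2 ha0
  have hAB : A ≤ B := Real.sqrt_le_sqrt hab
  have hnum := one_add_sq_le_of_sq_sub_sq_lt_quarter hA0 hAB (by rwa [hA2, hB2])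
    (by rwa [hA2, hB2])
  rw [hA2, hB2] at hnum
  set E := a + b - 2 * negLogOneSub (s * t)
  set K := 1 + 25 * (A * B)
  have hK : 0 ≤ K := by positivity
  have h1x : 0 < 1 - s * s := by linarith
  have h1y : 0 < 1 - t * t := by linarith
  have hP : 0 < (s + t) ^ 2 * (1 - s * s) * (1 - t * t) := by
    have : 0 < s + t := by linarith
    positivity
  refine le_of_mul_le_mul_right ?_ hP
  calc E * ((s + t) ^ 2 * (1 - s * s) * (1 - t * t))
      ≤ (t * t - s * s) ^ 2 := by
        rw [le_div_iff₀ (mul_pos h1x h1y)] at hW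
        nlinarith [mul_le_mul_of_nonneg_right hW (sq_nonneg (s + t))]
    _ ≤ ((b - a) * (1 - s * s)) ^ 2 := by gcongr; nlinarith
    _ = (B - A) ^ 2 * (B + A) ^ 2 * (1 - s * s) ^ 2 := by rw [← hA2, ← hB2]; ring
    _ ≤ (B - A) ^ 2 * ((1 + b) * (s + t) ^ 2) * (1 - s * s) ^ 2 := by gcongr
    _ ≤ (B - A) ^ 2 * ((1 - (b - a)) * K * (s + t) ^ 2) * (1 - s * s) ^ 2 := by gcongr
    _ = (B - A) ^ 2 * K * (s + t) ^ 2 * (1 - s * s) * ((1 - (b - a)) * (1 - s * s)) := by ring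
    _ ≤ (B - A) ^ 2 * K * (s + t) ^ 2 * (1 - s * s) * (1 - t * t) := by gcongr; linarith
    _ = (B - A) ^ 2 * K * ((s + t) ^ 2 * (1 - s * s) * (1 - t * t)) := by ring

lemma negLogOneSub_add_sub_two_mul_le_of_lt_two_mul (hs : 0 < s) (hst : s ≤ t) (ht : t < 1)
    (h2 : negLogOneSub (t * t) < 2 * negLogOneSub (s * s)) :
    negLogOneSub (s * s) + negLogOneSub (t * t) - 2 * negLogOneSub (s * t)
      ≤ (√(negLogOneSub (t * t)) - √(negLogOneSub (s * s))) ^ 2 *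
        (1 + 25 * (√(negLogOneSub (s * s)) * √(negLogOneSub (t * t)))) := by
  rcases lt_or_ge (negLogOneSub (t * t) - negLogOneSub (s * s)) (1 / 4) with hd | hd
  · exact negLogOneSub_add_sub_two_mul_le_of_sub_lt_quarter hs hst ht h2 hd
  have hx : s * s < 1 := by nlinarith
  have hst1 : s * t < 1 := by nlinarith
  have hau : negLogOneSub (s * s) ≤ negLogOneSub (s * t) :=
    negLogOneSub_le_negLogOneSub (by nlinarith) hst1
  have ha0 : 0 < negLogOneSub (s * s) := (mul_pos hs hs).trans_le (le_negLogOneSub hx)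
  have hab : negLogOneSub (s * s) ≤ negLogOneSub (t * t) := by linarith
  have hA2 := Real.sq_sqrt ha0.le
  have hB2 := Real.sq_sqrt (ha0.le.trans hab)
  calc _ ≤ negLogOneSub (t * t) - negLogOneSub (s * s) := by linarith
    _ = √(negLogOneSub (t * t)) ^ 2 - √(negLogOneSub (s * s)) ^ 2 := by rw [hA2, hB2]
    _ ≤ _ := sq_sub_sq_le_of_quarter_le (Real.sqrt_pos.2 ha0) (Real.sqrt_le_sqrt hab)
        (by rwa [hA2, hB2])

lemma dirDelta_radicand_le_of_two_mul_le (hs : 0 ≤ s) (hst : s ≤ t) (ht : t < 1)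
    (h2 : 2 * negLogOneSub (s * s) ≤ negLogOneSub (t * t)) :
    1 - dirKProfile (s * t) ^ 2 / (dirKProfile (s * s) * dirKProfile (t * t))
      ≤ 25 * (√(negLogOneSub (t * t)) - √(negLogOneSub (s * s))) ^ 2 := by
  have hx : s * s < 1 := by nlinarith
  have hy : t * t < 1 := by nlinarith
  have hst1 : s * t < 1 := by nlinarith
  have ha0 : 0 ≤ negLogOneSub (s * s) := (mul_self_nonneg s).trans (le_negLogOneSub hx)
  have hkx := dirKProfile_mul_one_sub_le (mul_self_nonneg s) hx
  have hky := dirKProfile_mul_one_sub_le (mul_self_nonneg t) hy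
  have hkx1 := one_le_dirKProfile (mul_self_nonneg s) hx
  have hky1 := one_le_dirKProfile (mul_self_nonneg t) hy
  have hkst := one_le_dirKProfile (mul_nonneg hs (hs.trans hst)) hst1
  have hratio : (1 - s * s) * (1 - t * t)
      ≤ dirKProfile (s * t) ^ 2 / (dirKProfile (s * s) * dirKProfile (t * t)) := by
    rw [le_div_iff₀ (by positivity)]
    nlinarith [mul_le_mul hkx hky (by nlinarith) zero_le_one]
  have hB2 := Real.sq_sqrt (ha0.trans (by linarith : negLogOneSub (s * s) ≤ negLogOneSub (t * t)))
  calc _ ≤ 1 - (1 - s * s) * (1 - t * t) := by linarith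
    _ ≤ 2 * negLogOneSub (t * t) := by nlinarith [le_negLogOneSub hy]
    _ = 2 * √(negLogOneSub (t * t)) ^ 2 := by rw [hB2]
    _ ≤ _ := two_mul_sq_le_mul_sq_sub (by rwa [Real.sq_sqrt ha0, hB2])

lemma dirDelta_radicand_le_of_lt_two_mul (hs : 0 ≤ s) (hst : s ≤ t) (ht : t < 1)
    (h2 : negLogOneSub (t * t) < 2 * negLogOneSub (s * s)) :
    1 - dirKProfile (s * t) ^ 2 / (dirKProfile (s * s) * dirKProfile (t * t))
      ≤ 25 * (√(negLogOneSub (t * t)) - √(negLogOneSub (s * s))) ^ 2 := by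
  have hs0 : 0 < s := by
    refine lt_of_le_of_ne hs fun h0 => ?_
    subst h0
    have := le_negLogOneSub (by nlinarith : t * t < 1)
    simp only [mul_zero, negLogOneSub_zero] at h2
    nlinarith
  have hx : s * s < 1 := by nlinarith
  have ha0 : 0 < negLogOneSub (s * s) := (mul_pos hs0 hs0).trans_le (le_negLogOneSub hx)
  have hb0 : 0 < negLogOneSub (t * t) :=
    ha0.trans_le (negLogOneSub_le_negLogOneSub (by nlinarith) (by nlinarith))
  have hkey := sq_mul_sq_sub_sq_le (A := √(negLogOneSub (s * s))) (B := √(negLogOneSub (t * t)))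
    (by positivity) (by
      rw [Real.sq_sqrt ha0.le, Real.sq_sqrt hb0.le]
      exact negLogOneSub_add_sub_two_mul_le_of_lt_two_mul hs0 hst ht h2)
  rw [Real.sq_sqrt ha0.le, Real.sq_sqrt hb0.le] at hkey
  rw [dirKProfile_ratio_of_pos hs0 (hs0.trans_le hst), one_sub_div (by positivity),
    div_le_iff₀ (by positivity)]
  linarith

theorem dirDelta_ofReal_le (hs : 0 ≤ s) (hst : s ≤ t) (ht : t < 1) :
    dirDelta s t ≤ 5 * (√(negLogOneSub (t * t)) - √(negLogOneSub (s * s))) := by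
  have hs1 : |s| < 1 := by rw [abs_of_nonneg hs]; linarith
  have ht1 : |t| < 1 := by rw [abs_of_nonneg (hs.trans hst)]; exact ht
  have hmono : √(negLogOneSub (s * s)) ≤ √(negLogOneSub (t * t)) :=
    Real.sqrt_le_sqrt (negLogOneSub_le_negLogOneSub (by nlinarith) (by nlinarith))
  rw [dirDelta_ofReal hs1 ht1, Real.sqrt_le_iff, mul_pow]
  refine ⟨by linarith, ?_⟩
  norm_num only
  rcases le_or_gt (2 * negLogOneSub (s * s)) (negLogOneSub (t * t)) with h2 | h2
  · exact dirDelta_radicand_le_of_two_mul_le hs hst ht h2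
  · exact dirDelta_radicand_le_of_lt_two_mul hs hst ht h2

end RealSegment

/-- There is `M ∈ (0,∞)` such that for all `r ∈ [0,1)`, the curve `γ_r : [0,r] → 𝔻, t ↦ t`
satisfies `ℓ_δ(γ_r) ≤ M·(log(1/(1−r)))^{1/2}` for the Dirichlet metric `δ`. -/
theorem dirichlet_length_bound :
    ∃ M : ℝ, 0 < M ∧ ∀ r : ℝ, 0 ≤ r → r < 1 →
      curveLen dirDelta 0 r (fun t : ℝ => (t : ℂ)) ≤
        ENNReal.ofReal (M * Real.sqrt (Real.log (1 / (1 - r)))) := by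
  refine ⟨5, by norm_num, fun r hr0 hr1 => ?_⟩
  calc curveLen dirDelta 0 r (fun t : ℝ => (t : ℂ))
      ≤ ENNReal.ofReal (5 * √(negLogOneSub (r * r)) - 5 * √(negLogOneSub (0 * 0))) :=
        curveLen_le_of_le_sub (F := fun v => 5 * √(negLogOneSub (v * v))) dirDelta_nonneg
          fun s t hs hst htr => by
            simpa only [← mul_sub] using dirDelta_ofReal_le hs hst (htr.trans_lt hr1)
    _ ≤ ENNReal.ofReal (5 * √(Real.log (1 / (1 - r)))) := by
        rw [mul_zero, negLogOneSub_zero, Real.sqrt_zero, mul_zero, sub_zero, one_div,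
          Real.log_inv]
        gcongr
        exact negLogOneSub_le_negLogOneSub (by nlinarith) hr1
end

section
/- Let 0 < r < 1, let 0 ≤ θ₁ < θ₂ < … < θₙ ≤ π, let D = {r·e^{iθ₁}, …, r·e^{iθₙ}} ⊂ 𝔻, and let ε > 0. Then δ(x,y) ≥ ε for all distinct x, y ∈ D if and only if δ(r·e^{iθ_k}, r·e^{iθ_{k+1}}) ≥ ε for all 1 ≤ k ≤ n−1, where δ is the Dirichlet metric. -/
open Complex Real

/-! On the circle `|z| = r` the Dirichlet distance is
`δ(r e^{is}, r e^{it})² = 1 - |log (1 - r² e^{i(s-t)})|² / log² (1 - r²)`, a function of `|s - t|`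
alone. It is increasing in `|s - t| ∈ [0, π]` because `H(t) = |log (1 - ρ e^{it})|²` is
decreasing there, so the gap between any two of the points dominates the gap between one of them
and its neighbour. Writing `w = 1 - ρ e^{it} = |w| e^{-iβ}` with `0 ≤ β < π/2`, one finds
`|w| H'(t) / 2 = sin β · log |w| - β (|w| - cos β)`, which is `≤ 0` by `log s ≤ s - 1`,
`sin β ≤ β` and `β cos β ≤ sin β`. -/

open Set
open scoped ComplexConjugate

theorem Real.sin_mul_log_le_mul_sub_cos {s b : ℝ} (hs : 0 < s) (hb0 : 0 ≤ b) (hb : b < π / 2) :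
    Real.sin b * Real.log s ≤ b * (s - Real.cos b) := by
  have hsin : 0 ≤ Real.sin b := Real.sin_nonneg_of_nonneg_of_le_pi hb0 (by linarith [Real.pi_pos])
  have hlog : Real.sin b * Real.log s ≤ Real.sin b * (s - 1) :=
    mul_le_mul_of_nonneg_left (Real.log_le_sub_one_of_pos hs) hsin
  have hcos : b * Real.cos b ≤ Real.sin b := by
    have hcos_pos : 0 < Real.cos b := Real.cos_pos_of_mem_Ioo ⟨by linarith [Real.pi_pos], hb⟩
    have := Real.le_tan hb0 hb
    rwa [Real.tan_eq_sin_div_cos, le_div_iff₀ hcos_pos] at this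
  nlinarith [mul_le_mul_of_nonneg_left (Real.sin_le hb0) hs.le]

theorem Complex.inner_log_I_mul_sub_one_div_nonpos {w : ℂ} (hre : 0 < w.re) (him : w.im ≤ 0) :
    inner ℝ (log w) (I * (w - 1) / w) ≤ 0 := by
  have hw : w ≠ 0 := fun h => by simp [h] at hre
  have hnorm : 0 < ‖w‖ := norm_pos_iff.2 hw
  have harg : arg w ≤ 0 := by
    rcases him.lt_or_eq with h | h
    · exact (arg_neg_iff.2 h).le
    · exact (arg_eq_zero_iff.2 ⟨hre.le, h⟩).le
  have harg' : -arg w < π / 2 := by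
    have := abs_arg_lt_pi_div_two_iff.2 (Or.inl hre)
    linarith [neg_abs_le (arg w), abs_neg (arg w)]
  have key := Real.sin_mul_log_le_mul_sub_cos hnorm (neg_nonneg.2 harg) harg'
  rw [Real.sin_neg, Real.cos_neg, sin_arg, cos_arg hw] at key
  have hnum : -w.im * Real.log ‖w‖ + arg w * (‖w‖ ^ 2 - w.re) ≤ 0 := by
    have := mul_le_mul_of_nonneg_left key hnorm.le
    field_simp at this
    linarith
  have hinner : inner ℝ (log w) (I * (w - 1) / w)
      = (-w.im * Real.log ‖w‖ + arg w * (‖w‖ ^ 2 - w.re)) / ‖w‖ ^ 2 := by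
    rw [Complex.inner, ← normSq_eq_norm_sq]
    simp only [div_re, div_im, log_re, log_im, mul_re, mul_im, sub_re, sub_im, I_re, I_im,
      one_re, one_im, conj_re, conj_im]
    rw [normSq_apply]
    field_simp
    ring
  rw [hinner]
  exact div_nonpos_of_nonpos_of_nonneg hnum (by positivity)

theorem Complex.re_one_sub_pos {z : ℂ} (hz : ‖z‖ < 1) : 0 < (1 - z).re := by
  rw [sub_re, one_re]
  linarith [re_le_norm z]

theorem norm_ofReal_mul_exp_mul_I {ρ : ℝ} (hρ : 0 ≤ ρ) (t : ℝ) :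
    ‖(ρ : ℂ) * exp (t * I)‖ = ρ := by
  rw [norm_mul, norm_exp_ofReal_mul_I, mul_one, norm_real, Real.norm_of_nonneg hρ]

theorem re_one_sub_ofReal_mul_exp_mul_I_pos {ρ : ℝ} (hρ0 : 0 ≤ ρ) (hρ1 : ρ < 1) (t : ℝ) :
    0 < (1 - ρ * exp (t * I)).re :=
  re_one_sub_pos (by rwa [norm_ofReal_mul_exp_mul_I hρ0])

theorem hasDerivAt_log_one_sub_mul_exp {ρ : ℝ} (hρ0 : 0 ≤ ρ) (hρ1 : ρ < 1) (t : ℝ) :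
    HasDerivAt (fun t : ℝ => log (1 - ρ * exp (t * I)))
      (I * ((1 - ρ * exp (t * I)) - 1) / (1 - ρ * exp (t * I))) t := by
  have hexp : HasDerivAt (fun t : ℝ => exp (t * I)) (exp (t * I) * I) t := by
    simpa using ((ofRealCLM.hasDerivAt (x := t)).mul_const I).cexp
  have hw := (hexp.const_mul (ρ : ℂ)).const_sub 1
  exact (hw.congr_deriv (by ring)).clog_real
    (Or.inl (re_one_sub_ofReal_mul_exp_mul_I_pos hρ0 hρ1 t))

theorem antitoneOn_norm_log_one_sub_mul_exp_sq {ρ : ℝ} (hρ0 : 0 ≤ ρ) (hρ1 : ρ < 1) :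
    AntitoneOn (fun t : ℝ => ‖log (1 - ρ * exp (t * I))‖ ^ 2) (Icc 0 π) := by
  have hderiv t := (hasDerivAt_log_one_sub_mul_exp hρ0 hρ1 t).norm_sq
  refine antitoneOn_of_hasDerivWithinAt_nonpos (convex_Icc 0 π)
    (fun t _ => (hderiv t).continuousAt.continuousWithinAt)
    (fun t _ => (hderiv t).hasDerivWithinAt) ?_
  rw [interior_Icc]
  rintro t ⟨ht0, htπ⟩
  have hre := re_one_sub_ofReal_mul_exp_mul_I_pos hρ0 hρ1 t
  have him : (1 - ρ * exp (t * I)).im ≤ 0 := by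
    rw [sub_im, one_im, im_ofReal_mul, exp_ofReal_mul_I_im]
    nlinarith [Real.sin_nonneg_of_nonneg_of_le_pi ht0.le htπ.le]
  nlinarith [inner_log_I_mul_sub_one_div_nonpos hre him]

theorem norm_log_one_sub_mul_exp_abs {ρ : ℝ} (hρ0 : 0 ≤ ρ) (hρ1 : ρ < 1) (t : ℝ) :
    ‖log (1 - ρ * exp (|t| * I))‖ = ‖log (1 - ρ * exp (t * I))‖ := by
  rcases abs_choice t with h | h
  · rw [h]
  have hconj : 1 - ρ * exp (|t| * I) = conj (1 - ρ * exp (t * I)) := by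
    rw [h, map_sub, map_one, map_mul, conj_ofReal, ← exp_conj, map_mul, conj_ofReal, conj_I]
    push_cast
    ring_nf
  rw [hconj, log_conj _ (slitPlane_arg_ne_pi
    (Or.inl (re_one_sub_ofReal_mul_exp_mul_I_pos hρ0 hρ1 t))), norm_conj]

theorem norm_mul_conj_lt_one {z w : ℂ} (hz : ‖z‖ < 1) (hw : ‖w‖ < 1) : ‖z * conj w‖ < 1 := by
  rw [norm_mul, norm_conj]
  nlinarith [norm_nonneg z, norm_nonneg w]

theorem dirK_eq_neg_log_div {z w : ℂ} (hz : ‖z‖ < 1) (hw : ‖w‖ < 1) (h : z * conj w ≠ 0) :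
    dirK z w = -log (1 - z * conj w) / (z * conj w) := by
  have hslit : 1 - z * conj w ∈ slitPlane := Or.inl (re_one_sub_pos (norm_mul_conj_lt_one hz hw))
  rw [dirK, if_neg h, one_div, one_div, log_inv _ (slitPlane_arg_ne_pi hslit)]
  ring

theorem dirK_self {z : ℂ} (hz0 : z ≠ 0) (hz1 : ‖z‖ < 1) :
    dirK z z = ((-Real.log (1 - ‖z‖ ^ 2) / ‖z‖ ^ 2 : ℝ) : ℂ) := by
  have hzz : z * conj z = ((‖z‖ ^ 2 : ℝ) : ℂ) := by rw [mul_conj, normSq_eq_norm_sq]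
  have hpos : (0 : ℝ) ≤ 1 - ‖z‖ ^ 2 := by nlinarith [norm_nonneg z]
  rw [dirK_eq_neg_log_div hz1 hz1 (mul_ne_zero hz0 ((map_ne_zero _).2 hz0)), hzz,
    ← ofReal_one, ← ofReal_sub, ← ofReal_log hpos, ← ofReal_neg, ← ofReal_div]

theorem dirDelta_eq {z w : ℂ} (hz0 : z ≠ 0) (hz1 : ‖z‖ < 1) (hw0 : w ≠ 0) (hw1 : ‖w‖ < 1) :
    dirDelta z w = √(1 - ‖log (1 - z * conj w)‖ ^ 2 /
      (Real.log (1 - ‖z‖ ^ 2) * Real.log (1 - ‖w‖ ^ 2))) := by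
  have hzw : z * conj w ≠ 0 := mul_ne_zero hz0 ((map_ne_zero _).2 hw0)
  rw [dirDelta, dirK_eq_neg_log_div hz1 hw1 hzw, dirK_self hz0 hz1, dirK_self hw0 hw1,
    ofReal_re, ofReal_re, norm_div, norm_neg, norm_mul, norm_conj]
  congr 2
  have hz : 0 < ‖z‖ := norm_pos_iff.2 hz0
  have hw : 0 < ‖w‖ := norm_pos_iff.2 hw0
  field_simp

theorem dirDelta_mul_exp {r : ℝ} (hr0 : 0 < r) (hr1 : r < 1) (s t : ℝ) :
    dirDelta (r * exp (s * I)) (r * exp (t * I)) =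
      √(1 - ‖log (1 - (r ^ 2 : ℝ) * exp (|s - t| * I))‖ ^ 2 / Real.log (1 - r ^ 2) ^ 2) := by
  have hnorm := norm_ofReal_mul_exp_mul_I hr0.le
  have hne (u : ℝ) : (r : ℂ) * exp (u * I) ≠ 0 := norm_pos_iff.1 (by rw [hnorm]; exact hr0)
  have hprod : (r : ℂ) * exp (s * I) * conj ((r : ℂ) * exp (t * I)) =
      (r ^ 2 : ℝ) * exp ((s - t : ℝ) * I) := by
    rw [map_mul, conj_ofReal, ← exp_conj, map_mul, conj_ofReal, conj_I, mul_mul_mul_comm,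
      ← Complex.exp_add]
    push_cast
    ring_nf
  rw [dirDelta_eq (hne s) (by rw [hnorm]; exact hr1) (hne t) (by rw [hnorm]; exact hr1),
    hnorm, hnorm, hprod, norm_log_one_sub_mul_exp_abs (by positivity) (by nlinarith), ← sq]

theorem dirDelta_mul_exp_le {r : ℝ} (hr0 : 0 < r) (hr1 : r < 1) {s t s' t' : ℝ}
    (h : |s - t| ≤ |s' - t'|) (h' : |s' - t'| ≤ π) :
    dirDelta (r * exp (s * I)) (r * exp (t * I)) ≤
      dirDelta (r * exp (s' * I)) (r * exp (t' * I)) := by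
  rw [dirDelta_mul_exp hr0 hr1, dirDelta_mul_exp hr0 hr1]
  refine Real.sqrt_le_sqrt (sub_le_sub_left (div_le_div_of_nonneg_right ?_ (sq_nonneg _)) 1)
  exact antitoneOn_norm_log_one_sub_mul_exp_sq (by positivity) (by nlinarith)
    ⟨abs_nonneg _, h.trans h'⟩ ⟨abs_nonneg _, h'⟩ h

theorem circle_separated_iff_adjacent_general (r : ℝ) (hr0 : 0 < r) (hr1 : r < 1)
    (n : ℕ) (θ : ℕ → ℝ) (hθ0 : ∀ i, i < n → 0 ≤ θ i ∧ θ i ≤ π)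
    (hθmono : ∀ i j, i < j → j < n → θ i < θ j) (ε : ℝ) :
    (∀ i j, i < n → j < n → i ≠ j →
        ε ≤ dirDelta ((r : ℂ) * Complex.exp ((θ i : ℂ) * Complex.I))
              ((r : ℂ) * Complex.exp ((θ j : ℂ) * Complex.I))) ↔
      (∀ k, k + 1 < n →
        ε ≤ dirDelta ((r : ℂ) * Complex.exp ((θ k : ℂ) * Complex.I))
              ((r : ℂ) * Complex.exp ((θ (k + 1) : ℂ) * Complex.I))) := by
  have gap_le (i j : ℕ) (hij : i < j) (hj : j < n) :
      |θ i - θ (i + 1)| ≤ |θ i - θ j| ∧ |θ i - θ j| ≤ π := by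
    have hnext : θ (i + 1) ≤ θ j := by
      rcases (show i + 1 ≤ j from hij).eq_or_lt with h | h
      · rw [h]
      · exact (hθmono _ _ h hj).le
    have := hθmono i (i + 1) (by omega) (by omega)
    rw [abs_sub_comm, abs_of_pos (by linarith), abs_sub_comm, abs_of_pos (by linarith)]
    exact ⟨by linarith, by linarith [(hθ0 i (by omega)).1, (hθ0 j hj).2]⟩
  refine ⟨fun h k hk => h k (k + 1) (by omega) hk (by omega), fun h i j hi hj hij => ?_⟩
  rcases hij.lt_or_gt with hlt | hlt
  · obtain ⟨hgap, hπ⟩ := gap_le i j hlt hj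
    exact (h i (by omega)).trans (dirDelta_mul_exp_le hr0 hr1 hgap hπ)
  · obtain ⟨hgap, hπ⟩ := gap_le j i hlt hi
    rw [abs_sub_comm (θ j) (θ i)] at hgap hπ
    exact (h j (by omega)).trans (dirDelta_mul_exp_le hr0 hr1 hgap hπ)

/-- For `0 < r < 1`, angles `0 ≤ θ₀ < θ₁ < … < θ_{n−1} ≤ π` and the points
`xₖ = r·e^{iθₖ}`, the set `{x₀, …, x_{n−1}}` is `ε`-separated in the Dirichlet metric if
and only if consecutive points are at Dirichlet distance at least `ε`. -/
theorem circle_separated_iff_adjacent (r : ℝ) (hr0 : 0 < r) (hr1 : r < 1)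
    (n : ℕ) (θ : ℕ → ℝ) (hθ0 : ∀ i, i < n → 0 ≤ θ i ∧ θ i ≤ π)
    (hθmono : ∀ i j, i < j → j < n → θ i < θ j) (ε : ℝ) (hε : 0 < ε) :
    (∀ i j, i < n → j < n → i ≠ j →
        ε ≤ dirDelta ((r : ℂ) * Complex.exp ((θ i : ℂ) * Complex.I))
              ((r : ℂ) * Complex.exp ((θ j : ℂ) * Complex.I))) ↔
      (∀ k, k + 1 < n →
        ε ≤ dirDelta ((r : ℂ) * Complex.exp ((θ k : ℂ) * Complex.I))
              ((r : ℂ) * Complex.exp ((θ (k + 1) : ℂ) * Complex.I))) :=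
  circle_separated_iff_adjacent_general r hr0 hr1 n θ hθ0 hθmono ε
end

section
/- For every fixed s ∈ (0,1), the function t ↦ |log(1 − s·e^{it})| is nonincreasing on the interval [0, π], where log denotes the principal branch of the complex logarithm (note Re(1 − s·e^{it}) > 0). -/
/-!
Put `u = e^{it} - s`. Since `1 - s e^{it} = e^{it} · conj u`, for `0 < t < π` we get
`log (1 - s e^{it}) = log |u| + i (t - arg u)`, and the derivative of `|log (1 - s e^{it})|²`
is `2s/|u|² · (sin t · log |u| - (t - ψ) · Re u)` with `ψ = arg u ∈ [0, π]`.
As `|u| sin ψ = Im u = sin t`, the bracket is `≤ 0` by `log x ≤ x - 1` and the tangent-line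
inequality `sin t ≤ sin ψ + (t - ψ) cos ψ` of the concave sine on `[0, π]`.
-/

open Complex Real

open ComplexConjugate InnerProductSpace

theorem ConcaveOn.le_add_mul_sub_of_hasDerivAt {S : Set ℝ} {f : ℝ → ℝ} {f' x y : ℝ}
    (hf : ConcaveOn ℝ S f) (hx : x ∈ S) (hy : y ∈ S) (hf' : HasDerivAt f f' y) :
    f x ≤ f y + f' * (x - y) := by
  rcases lt_trichotomy x y with hxy | rfl | hxy
  · have := hf.le_slope_of_hasDerivAt hx hy hxy hf'
    rw [slope_def_field, le_div_iff₀ (sub_pos.2 hxy)] at this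
    linarith
  · simp
  · have := hf.slope_le_of_hasDerivAt hy hx hxy hf'
    rw [slope_def_field, div_le_iff₀ (sub_pos.2 hxy)] at this
    linarith

theorem Real.sin_le_sin_add_mul_cos {x y : ℝ} (hx : x ∈ Set.Icc 0 π)
    (hy : y ∈ Set.Icc 0 π) : sin x ≤ sin y + cos y * (x - y) :=
  strictConcaveOn_sin_Icc.concaveOn.le_add_mul_sub_of_hasDerivAt hx hy (hasDerivAt_sin y)

theorem Complex.sin_mul_log_norm_le {t : ℝ} (ht : t ∈ Set.Icc 0 π) {u : ℂ} (hu : u ≠ 0)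
    (hut : u.im = Real.sin t) : Real.sin t * Real.log ‖u‖ ≤ (t - arg u) * u.re := by
  have hsin : 0 ≤ Real.sin t := Real.sin_nonneg_of_nonneg_of_le_pi ht.1 ht.2
  have harg : arg u ∈ Set.Icc 0 π := ⟨arg_nonneg_iff.2 (hut ▸ hsin), arg_le_pi u⟩
  have hR : 0 < ‖u‖ := norm_pos_iff.2 hu
  calc Real.sin t * Real.log ‖u‖ ≤ Real.sin t * (‖u‖ - 1) :=
        mul_le_mul_of_nonneg_left (log_le_sub_one_of_pos hR) hsin
    _ = ‖u‖ * (Real.sin t - Real.sin (arg u)) := by rw [← hut, ← norm_mul_sin_arg u]; ring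
    _ ≤ ‖u‖ * (Real.cos (arg u) * (t - arg u)) := by
        gcongr; linarith [sin_le_sin_add_mul_cos ht harg]
    _ = (t - arg u) * u.re := by rw [← norm_mul_cos_arg u]; ring

theorem Complex.one_sub_mul_exp_mul_I (s t : ℝ) :
    1 - s * exp (t * I) = exp (t * I) * conj (exp (t * I) - s) := by
  have h : exp (t * I) * conj (exp (t * I)) = 1 := by
    rw [mul_conj, normSq_eq_norm_sq, norm_exp_ofReal_mul_I, one_pow, ofReal_one]
  rw [map_sub, conj_ofReal, mul_sub, h, mul_comm]

theorem Complex.norm_one_sub_mul_exp_mul_I (s t : ℝ) :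
    ‖1 - s * exp (t * I)‖ = ‖exp (t * I) - s‖ := by
  rw [one_sub_mul_exp_mul_I, norm_mul, norm_exp_ofReal_mul_I, norm_conj, one_mul]

theorem Complex.im_exp_ofReal_mul_I_sub (s t : ℝ) : (exp (t * I) - s).im = Real.sin t := by
  simp [exp_ofReal_mul_I_im]

theorem Complex.exp_ofReal_mul_I_sub_ne_zero (s : ℝ) {t : ℝ} (ht : t ∈ Set.Ioo 0 π) :
    exp (t * I) - s ≠ 0 := by
  intro h
  have him := im_exp_ofReal_mul_I_sub s t
  rw [h, zero_im] at him
  exact (Real.sin_pos_of_pos_of_lt_pi ht.1 ht.2).ne him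

theorem Complex.arg_one_sub_mul_exp_mul_I (s : ℝ) {t : ℝ} (ht : t ∈ Set.Ioo 0 π) :
    arg (1 - s * exp (t * I)) = t - arg (exp (t * I) - s) := by
  have him : 0 < (exp (t * I) - s).im := by
    rw [im_exp_ofReal_mul_I_sub]; exact Real.sin_pos_of_pos_of_lt_pi ht.1 ht.2
  have hu := exp_ofReal_mul_I_sub_ne_zero s ht
  have hnonneg : 0 ≤ arg (exp (t * I) - s) := arg_nonneg_iff.2 him.le
  have hlt : arg (exp (t * I) - s) < π := arg_lt_pi_iff.2 (Or.inr him.ne')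
  have hexp : arg (exp (t * I)) = t := by
    rw [arg_exp_mul_I, toIocMod_eq_self]; constructor <;> linarith [ht.1, ht.2]
  have hconj : arg (conj (exp (t * I) - s)) = -arg (exp (t * I) - s) := by
    rw [arg_conj, if_neg hlt.ne]
  rw [one_sub_mul_exp_mul_I, arg_mul (exp_ne_zero _) ((map_ne_zero _).2 hu), hexp, hconj,
    ← sub_eq_add_neg]
  rw [hexp, hconj]
  constructor <;> linarith [ht.1, ht.2]

theorem Complex.inner_log_one_sub_mul_exp_mul_I_deriv_nonpos {s : ℝ} (hs : 0 ≤ s) {t : ℝ}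
    (ht : t ∈ Set.Ioo 0 π) :
    ⟪log (1 - s * exp (t * I)), -(s * exp (t * I) * I) / (1 - s * exp (t * I))⟫_ℝ ≤ 0 := by
  set u := exp (t * I) - s with hu_def
  have hu : u ≠ 0 := exp_ofReal_mul_I_sub_ne_zero s ht
  have hlog :
      log (1 - s * exp (t * I)) = (Real.log ‖u‖ : ℂ) + ((t - arg u : ℝ) : ℂ) * I := by
    apply Complex.ext <;> simp [log_re, log_im, norm_one_sub_mul_exp_mul_I,
      arg_one_sub_mul_exp_mul_I s ht, u]
  have hquot : -(s * exp (t * I) * I) / (1 - s * exp (t * I)) =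
      ((s / ‖u‖ ^ 2 : ℝ) : ℂ) * (-I * u) := by
    rw [one_sub_mul_exp_mul_I, ← hu_def, ofReal_div, ofReal_pow, ← mul_conj']
    field_simp [exp_ne_zero]
  have hinner :
      ⟪log (1 - s * exp (t * I)), -(s * exp (t * I) * I) / (1 - s * exp (t * I))⟫_ℝ =
        s / ‖u‖ ^ 2 * (Real.sin t * Real.log ‖u‖ - (t - arg u) * u.re) := by
    rw [Complex.inner, hlog, hquot, mul_assoc, re_ofReal_mul, ← im_exp_ofReal_mul_I_sub s t,
      ← hu_def]
    simp only [mul_re, mul_im, neg_re, neg_im, I_re, I_im, add_re, add_im, ofReal_re, ofReal_im,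
      conj_re, conj_im]
    ring
  rw [hinner]
  have hkey := sin_mul_log_norm_le (Set.Ioo_subset_Icc_self ht) hu (im_exp_ofReal_mul_I_sub s t)
  exact mul_nonpos_of_nonneg_of_nonpos (by positivity) (sub_nonpos.2 hkey)

theorem Complex.hasDerivAt_one_sub_mul_exp_mul_I (s t : ℝ) :
    HasDerivAt (fun t : ℝ => 1 - s * exp (t * I)) (-(s * exp (t * I) * I)) t := by
  have h := (((hasDerivAt_id t).ofReal_comp.mul_const I).cexp.const_mul (s : ℂ)).const_sub 1
  simpa [mul_assoc] using h

theorem Complex.one_sub_mul_exp_mul_I_mem_slitPlane {s : ℝ} (hs : |s| < 1) (t : ℝ) :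
    1 - s * exp (t * I) ∈ slitPlane := by
  refine Or.inl ?_
  have hcos : s * Real.cos t ≤ |s| := by
    calc s * Real.cos t ≤ |s * Real.cos t| := le_abs_self _
      _ ≤ |s| := by rw [abs_mul]; exact mul_le_of_le_one_right (abs_nonneg s) (abs_cos_le_one t)
  simp [exp_ofReal_mul_I_re]
  linarith

/-- For fixed `s ∈ (0,1)`, the function `t ↦ |log(1 − s·e^{it})|` is nonincreasing on
`[0, π]`, where `log` is the principal branch of the complex logarithm. -/
theorem abs_log_antitone (s : ℝ) (hs : s ∈ Set.Ioo (0 : ℝ) 1) :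
    AntitoneOn (fun t : ℝ =>
        ‖Complex.log (1 - (s : ℂ) * Complex.exp ((t : ℂ) * Complex.I))‖)
      (Set.Icc 0 π) := by
  have hderiv (t : ℝ) : HasDerivAt (fun t : ℝ => ‖log (1 - s * exp (t * I))‖ ^ 2)
      (2 * ⟪log (1 - s * exp (t * I)), -(s * exp (t * I) * I) / (1 - s * exp (t * I))⟫_ℝ) t :=
    ((hasDerivAt_one_sub_mul_exp_mul_I s t).clog_real
      (one_sub_mul_exp_mul_I_mem_slitPlane (abs_lt.2 ⟨by linarith [hs.1], hs.2⟩) t)).norm_sq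
  have hsq : AntitoneOn (fun t : ℝ => ‖log (1 - s * exp (t * I))‖ ^ 2) (Set.Icc 0 π) := by
    refine antitoneOn_of_hasDerivWithinAt_nonpos (convex_Icc 0 π)
      (fun t _ => (hderiv t).continuousAt.continuousWithinAt)
      (fun t _ => (hderiv t).hasDerivWithinAt) fun t ht => ?_
    rw [interior_Icc] at ht
    exact mul_nonpos_of_nonneg_of_nonpos zero_le_two
      (inner_log_one_sub_mul_exp_mul_I_deriv_nonpos hs.1.le ht)
  exact fun a ha b hb hab => (sq_le_sq₀ (norm_nonneg _) (norm_nonneg _)).1 (hsq ha hb hab)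
end

section
/- For every t ∈ [0, π] and every s ∈ [0, 1), one has Im( log(1 − s·e^{it}) · (s − e^{−it}) ) ≤ 0, where log denotes the principal branch of the complex logarithm. -/
open Complex Real

/-! Put `w = e^{it}` and `F u = Im (log (1 - u w) * (u - w⁻¹))` for `u ∈ [0, s]`. Since
`(u - w⁻¹) / (1 - u w) = -w⁻¹`, the derivative of `log (1 - u w) * (u - w⁻¹)` in `u` is
`1 + log (1 - u w)`, so `F' u = arg (1 - u w)`, which is `≤ 0` because `Re (1 - u w) > 0` and
`Im (1 - u w) = -u Im w ≤ 0`. Hence `F` decreases from `F 0 = 0`. -/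

namespace Complex

lemma arg_nonpos_of_re_pos_of_im_nonpos {z : ℂ} (hre : 0 < z.re) (him : z.im ≤ 0) :
    arg z ≤ 0 := by
  rcases him.lt_or_eq with him | him
  · exact (arg_neg_iff.2 him).le
  · exact (arg_eq_zero_iff.2 ⟨hre.le, him⟩).le

variable {w : ℂ}

lemma hasDerivAt_log_one_sub_ofReal_mul_mul (hw : w ≠ 0) {u : ℝ}
    (hu : 1 - u * w ∈ slitPlane) :
    HasDerivAt (fun v : ℝ ↦ log (1 - v * w) * (v - w⁻¹)) (1 + log (1 - u * w)) u := by
  have hid : HasDerivAt (fun v : ℝ ↦ (v : ℂ)) 1 u := (hasDerivAt_id u).ofReal_comp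
  have hlin : HasDerivAt (fun v : ℝ ↦ 1 - v * w) (-w) u := by
    simpa using (hid.mul_const w).const_sub 1
  refine ((hlin.clog_real hu).mul (hid.sub_const w⁻¹)).congr_deriv ?_
  have hne : 1 - (u : ℂ) * w ≠ 0 := slitPlane_ne_zero hu
  have hnum : -w * (u - w⁻¹) = 1 - u * w := by field_simp; ring
  rw [mul_one, div_mul_eq_mul_div, hnum, div_self hne]

lemma hasDerivAt_im_log_one_sub_ofReal_mul_mul (hw : w ≠ 0) {u : ℝ}
    (hu : 1 - u * w ∈ slitPlane) :
    HasDerivAt (fun v : ℝ ↦ (log (1 - v * w) * (v - w⁻¹)).im) (arg (1 - u * w)) u := by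
  have h := imCLM.hasFDerivAt.comp_hasDerivAt u (hasDerivAt_log_one_sub_ofReal_mul_mul hw hu)
  rwa [imCLM_apply, add_im, one_im, log_im, zero_add] at h

theorem im_log_one_sub_mul_mul_sub_inv_nonpos (hw : 0 ≤ w.im) {s : ℝ} (hs : 0 ≤ s)
    (hsw : s * w.re < 1) :
    (log (1 - s * w) * (s - w⁻¹)).im ≤ 0 := by
  rcases eq_or_ne w 0 with rfl | hw0
  · simp
  set F : ℝ → ℝ := fun v ↦ (log (1 - v * w) * (v - w⁻¹)).im
  have hre : ∀ u ∈ Set.Icc 0 s, 0 < (1 - u * w).re := fun u hu ↦ by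
    simp only [sub_re, one_re, re_ofReal_mul]
    rcases le_or_gt w.re 0 with h | h <;> nlinarith [hu.1, hu.2]
  have him : ∀ u ∈ Set.Icc 0 s, (1 - u * w).im ≤ 0 := fun u hu ↦ by
    simpa only [sub_im, one_im, im_ofReal_mul, zero_sub, neg_nonpos] using mul_nonneg hu.1 hw
  have hderiv : ∀ u ∈ Set.Icc 0 s, HasDerivAt F (arg (1 - u * w)) u := fun u hu ↦
    hasDerivAt_im_log_one_sub_ofReal_mul_mul hw0 (Or.inl (hre u hu))
  have hanti : AntitoneOn F (Set.Icc 0 s) := by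
    refine antitoneOn_of_hasDerivWithinAt_nonpos (convex_Icc 0 s)
      (fun u hu ↦ (hderiv u hu).continuousAt.continuousWithinAt)
      (fun u hu ↦ (hderiv u (interior_subset hu)).hasDerivWithinAt) fun u hu ↦ ?_
    exact arg_nonpos_of_re_pos_of_im_nonpos (hre u (interior_subset hu))
      (him u (interior_subset hu))
  calc F s ≤ F 0 := hanti ⟨le_rfl, hs⟩ ⟨hs, le_rfl⟩ hs
    _ = 0 := by simp [F]

end Complex

/-- For every `t ∈ [0, π]` and `s ∈ [0, 1)`, one has
`Im( log(1 − s·e^{it}) · (s − e^{−it}) ) ≤ 0`, with `log` the principal branch. -/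
theorem im_log_mul_nonpos (t : ℝ) (ht : t ∈ Set.Icc 0 π) (s : ℝ)
    (hs : s ∈ Set.Ico (0 : ℝ) 1) :
    (Complex.log (1 - (s : ℂ) * Complex.exp ((t : ℂ) * Complex.I)) *
        ((s : ℂ) - Complex.exp (-((t : ℂ) * Complex.I)))).im ≤ 0 := by
  rw [Complex.exp_neg]
  refine im_log_one_sub_mul_mul_sub_inv_nonpos ?_ hs.1 ?_
  · rw [exp_ofReal_mul_I_im]
    exact sin_nonneg_of_nonneg_of_le_pi ht.1 ht.2
  · rw [exp_ofReal_mul_I_re]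
    nlinarith [cos_le_one t, hs.1, hs.2]
end

section
/- For 0 ≤ r < 1 set θ(r) = √(1−r). Then the Dirichlet-metric distance δ(r·e^{iθ(r)}, r) converges to √(3/4) as r → 1⁻. -/
/-!
For `z = r e^{iθ}` and `w = r` put `q = z w̄ = r² e^{iθ}`; then
`δ(z, w)² = 1 - ‖log (1 - q)‖² / log (1 - r²)²`. With `θ² = 1 - r`,
`‖1 - q‖² = (1 - r²)² + 2 r² (1 - cos θ)` is comparable to `1 - r²` (as `1 - cos θ ≍ θ²`), so
`log ‖1 - q‖ / log (1 - r²) → 1/2`, while the argument of `1 - q` stays bounded by `π`.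
Hence `‖log (1 - q)‖² / log (1 - r²)² → 1/4` and `δ² → 3/4`.
-/

open Complex Real Filter Topology

open Asymptotics

theorem Complex.norm_log_inv (z : ℂ) : ‖Complex.log z⁻¹‖ = ‖Complex.log z‖ := by
  rw [log_inv_eq_ite]
  split_ifs <;> simp

theorem Complex.norm_log_sq (z : ℂ) : ‖Complex.log z‖ ^ 2 = Real.log ‖z‖ ^ 2 + z.arg ^ 2 := by
  rw [Complex.sq_norm, normSq_apply, log_re, log_im]
  ring

theorem Complex.norm_one_sub_ofReal_mul_exp_sq (ρ θ : ℝ) :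
    ‖1 - (ρ : ℂ) * exp (θ * I)‖ ^ 2 = (1 - ρ) ^ 2 + 2 * ρ * (1 - Real.cos θ) := by
  rw [Complex.sq_norm, normSq_apply]
  simp only [sub_re, sub_im, one_re, one_im, re_ofReal_mul, im_ofReal_mul, exp_ofReal_mul_I_re,
    exp_ofReal_mul_I_im]
  linear_combination ρ ^ 2 * Real.sin_sq_add_cos_sq θ

theorem Real.isBigO_log_sub_log_of_isTheta {α : Type*} {l : Filter α} {a b : α → ℝ}
    (hab : a =Θ[l] b) (hb : ∀ᶠ x in l, b x ≠ 0) :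
    (fun x => Real.log (a x) - Real.log (b x)) =O[l] (fun _ => (1 : ℝ)) := by
  obtain ⟨c, hc, hac⟩ := hab.1.exists_pos
  obtain ⟨c', hc', hbc⟩ := hab.2.exists_pos
  rw [isBigOWith_iff] at hac hbc
  refine IsBigO.of_bound (|Real.log c| + |Real.log c'|) ?_
  filter_upwards [hac, hbc, hb] with x hax hbx hbx0
  rw [Real.norm_eq_abs] at hax hbx
  have hbpos : 0 < |b x| := abs_pos.2 hbx0
  have hapos : 0 < |a x| := pos_of_mul_pos_right (hbpos.trans_le hbx) hc'.le
  have hle₁ : Real.log |a x| ≤ Real.log c + Real.log |b x| := by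
    rw [← Real.log_mul hc.ne' hbpos.ne']
    exact Real.log_le_log hapos hax
  have hle₂ : Real.log |b x| ≤ Real.log c' + Real.log |a x| := by
    rw [← Real.log_mul hc'.ne' hapos.ne']
    exact Real.log_le_log hbpos hbx
  rw [Real.log_abs, Real.log_abs] at hle₁ hle₂
  rw [norm_one, mul_one, Real.norm_eq_abs, abs_sub_le_iff]
  constructor <;> linarith [le_abs_self (Real.log c), neg_abs_le (Real.log c'),
    le_abs_self (Real.log c'), neg_abs_le (Real.log c)]

theorem Real.tendsto_log_div_log_of_isTheta {α : Type*} {l : Filter α} {a b : α → ℝ}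
    (hab : a =Θ[l] b) (hb : Tendsto b l (𝓝[≠] 0)) :
    Tendsto (fun x => Real.log (a x) / Real.log (b x)) l (𝓝 1) := by
  have hlogb : Tendsto (fun x => Real.log (b x)) l atBot := Real.tendsto_log_nhdsNE_zero.comp hb
  have hsmall : (fun x => Real.log (a x) - Real.log (b x)) =o[l] (fun x => Real.log (b x)) :=
    (Real.isBigO_log_sub_log_of_isTheta hab (hb self_mem_nhdsWithin)).trans_isLittleO
      ((isLittleO_one_left_iff ℝ).2 (tendsto_abs_atBot_atTop.comp hlogb))
  have hlim := hsmall.tendsto_div_nhds_zero.add_const 1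
  rw [zero_add] at hlim
  refine hlim.congr' ?_
  filter_upwards [hlogb.eventually_ne_atBot 0] with x hx
  field_simp
  ring

theorem Complex.tendsto_norm_log_sq_div_sq {α : Type*} {l : Filter α} {u : α → ℂ} {f : α → ℝ}
    {c : ℝ} (hf : Tendsto f l (Bornology.cobounded ℝ))
    (hu : Tendsto (fun x => Real.log ‖u x‖ / f x) l (𝓝 c)) :
    Tendsto (fun x => ‖Complex.log (u x)‖ ^ 2 / f x ^ 2) l (𝓝 (c ^ 2)) := by
  have harg : Tendsto (fun x => (f x)⁻¹ * (u x).arg) l (𝓝 0) :=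
    (tendsto_inv₀_cobounded.comp hf).zero_mul_isBoundedUnder_le
      (isBoundedUnder_of ⟨π, fun x => abs_arg_le_pi (u x)⟩)
  have hlim := (hu.pow 2).add (harg.pow 2)
  rw [zero_pow two_ne_zero, add_zero] at hlim
  refine hlim.congr fun x => ?_
  rw [norm_log_sq, add_div, div_pow, mul_pow, inv_pow, inv_mul_eq_div]

theorem norm_dirK {z w : ℂ} (h : z * starRingEnd ℂ w ≠ 0) :
    ‖dirK z w‖ = ‖Complex.log (1 - z * starRingEnd ℂ w)‖ / (‖z‖ * ‖w‖) := by
  rw [dirK, if_neg h, norm_mul, one_div, one_div, Complex.norm_log_inv, norm_inv, norm_mul,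
    Complex.norm_conj, inv_mul_eq_div]

theorem re_dirK_self {z : ℂ} (hz : z ≠ 0) :
    (dirK z z).re = -Real.log (1 - ‖z‖ ^ 2) / ‖z‖ ^ 2 := by
  have hzz : z * starRingEnd ℂ z ≠ 0 := by simpa using hz
  rw [dirK, if_neg hzz, Complex.mul_conj', one_div, one_div, ← ofReal_pow, ← ofReal_inv,
    ← ofReal_one, ← ofReal_sub, ← ofReal_inv, re_ofReal_mul, log_ofReal_re, Real.log_inv,
    inv_mul_eq_div]

theorem dirDelta_eq_sqrt {z w : ℂ} (hz : z ≠ 0) (hw : w ≠ 0) :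
    dirDelta z w = √(1 - ‖Complex.log (1 - z * starRingEnd ℂ w)‖ ^ 2 /
      (Real.log (1 - ‖z‖ ^ 2) * Real.log (1 - ‖w‖ ^ 2))) := by
  have hzw : z * starRingEnd ℂ w ≠ 0 := by simp [hz, hw]
  have hz' : ‖z‖ ≠ 0 := norm_ne_zero_iff.2 hz
  have hw' : ‖w‖ ≠ 0 := norm_ne_zero_iff.2 hw
  rw [dirDelta, norm_dirK hzw, re_dirK_self hz, re_dirK_self hw]
  congr 2
  field_simp

theorem dirDelta_ofReal_mul_exp_ofReal_mul_I {r : ℝ} (hr : r ≠ 0) (θ : ℝ) :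
    dirDelta (r * exp (θ * I)) r =
      √(1 - ‖Complex.log (1 - (r : ℂ) ^ 2 * exp (θ * I))‖ ^ 2 / Real.log (1 - r ^ 2) ^ 2) := by
  have hr' : (r : ℂ) ≠ 0 := ofReal_ne_zero.2 hr
  rw [dirDelta_eq_sqrt (mul_ne_zero hr' (exp_ne_zero _)) hr', norm_mul, norm_exp_ofReal_mul_I,
    mul_one, norm_real, Real.norm_eq_abs, sq_abs, conj_ofReal, ← sq]
  ring_nf

/- The two bounds come from `1 - θ² / 2 ≤ cos θ ≤ 1 - 2 θ² / π²` with `θ² = 1 - r`. -/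
theorem isTheta_norm_one_sub_sq_mul_exp_sqrt :
    (fun r : ℝ => ‖1 - (r : ℂ) ^ 2 * exp (√(1 - r) * I)‖ ^ 2) =Θ[𝓝[<] 1]
      (fun r => 1 - r ^ 2) := by
  have hexpand : ∀ r : ℝ, r < 1 →
      ‖1 - (r : ℂ) ^ 2 * exp (√(1 - r) * I)‖ ^ 2 =
        (1 - r ^ 2) ^ 2 + 2 * r ^ 2 * (1 - Real.cos √(1 - r)) ∧ √(1 - r) ^ 2 = 1 - r :=
    fun r hr => ⟨by rw [← ofReal_pow, norm_one_sub_ofReal_mul_exp_sq],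
      Real.sq_sqrt (by linarith)⟩
  refine ⟨IsBigO.of_bound 2 ?_, IsBigO.of_bound (2 * π ^ 2) ?_⟩ <;>
    filter_upwards [Ioo_mem_nhdsLT (show (1 / 2 : ℝ) < 1 by norm_num)] with r ⟨hr₀, hr₁⟩ <;>
    obtain ⟨hnorm, hθ⟩ := hexpand r hr₁ <;>
    rw [norm_pow, norm_norm, Real.norm_of_nonneg (by nlinarith), hnorm]
  · have hcos := Real.one_sub_sq_div_two_le_cos (x := √(1 - r))
    rw [hθ] at hcos
    nlinarith [mul_le_mul_of_nonneg_left hcos (sq_nonneg r)]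
  · have hθπ : |√(1 - r)| ≤ π := by
      rw [abs_of_nonneg (Real.sqrt_nonneg _)]
      linarith [Real.sqrt_le_one.2 (by linarith : 1 - r ≤ 1), Real.pi_gt_three]
    have hcos := Real.cos_le_one_sub_mul_cos_sq hθπ
    rw [hθ] at hcos
    have hcos' : 2 * (1 - r) ≤ (1 - Real.cos √(1 - r)) * π ^ 2 := by
      rw [← div_le_iff₀ (by positivity), mul_div_right_comm]
      linarith
    nlinarith [mul_le_mul_of_nonneg_left hcos' (sq_nonneg r),
      mul_nonneg (sq_nonneg π) (sq_nonneg (1 - r ^ 2)),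
      mul_pos (by nlinarith : (0 : ℝ) < 4 * r ^ 2 - 1) (by linarith : (0 : ℝ) < 1 - r)]

/-- With `θ(r) = √(1−r)`, the Dirichlet distance `δ(r·e^{iθ(r)}, r)` tends to `√(3/4)`
as `r → 1⁻`. -/
theorem dirichlet_circle_asymptotic :
    Tendsto
      (fun r : ℝ =>
        dirDelta ((r : ℂ) * Complex.exp ((Real.sqrt (1 - r) : ℂ) * Complex.I)) (r : ℂ))
      (𝓝[<] (1 : ℝ)) (𝓝 (Real.sqrt (3 / 4))) := by
  have hunit : ∀ᶠ r in 𝓝[<] (1 : ℝ), r ∈ Set.Ioo 0 1 := Ioo_mem_nhdsLT (by norm_num)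
  have hvanish : Tendsto (fun r : ℝ => 1 - r ^ 2) (𝓝[<] 1) (𝓝[≠] 0) := by
    refine tendsto_nhdsWithin_of_tendsto_nhds_of_eventually_within _ ?_ ?_
    · exact ((by fun_prop : Continuous fun r : ℝ => 1 - r ^ 2).tendsto' 1 0
        (by norm_num)).mono_left nhdsWithin_le_nhds
    · filter_upwards [hunit] with r ⟨hr₀, hr₁⟩
      exact (by nlinarith : 1 - r ^ 2 ≠ 0)
  have hlog : Tendsto (fun r : ℝ => Real.log ‖1 - (r : ℂ) ^ 2 * exp (√(1 - r) * I)‖ /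
      Real.log (1 - r ^ 2)) (𝓝[<] 1) (𝓝 (1 / 2)) := by
    refine ((Real.tendsto_log_div_log_of_isTheta isTheta_norm_one_sub_sq_mul_exp_sqrt
      hvanish).div_const 2).congr fun r => ?_
    rw [Real.log_pow]
    ring
  have hratio := Complex.tendsto_norm_log_sq_div_sq
    ((Real.tendsto_log_nhdsNE_zero.comp hvanish).mono_right IsOrderBornology.atBot_le_cobounded)
    hlog
  have hlim := (tendsto_const_nhds (x := (1 : ℝ)).sub hratio).sqrt
  rw [show (1 : ℝ) - (1 / 2) ^ 2 = 3 / 4 by norm_num] at hlim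
  refine hlim.congr' ?_
  filter_upwards [hunit] with r hr
  exact (dirDelta_ofReal_mul_exp_ofReal_mul_I hr.1.ne' _).symm
end

section
/- Define h : 𝔻 → ℂ by h(z) = 1 + z/log(1−z) for z ≠ 0 and h(0) = 0, using the principal branch of the logarithm. Then h is analytic on 𝔻, and for every n ≥ 1 its n-th Taylor coefficient at 0 equals c_n = ∫₀¹ t·Γ(n−t)/(Γ(n+1)·Γ(1−t)) dt; in particular every Taylor coefficient of h is nonnegative. -/
open Complex

/-- The Gregory-type coefficients `c_n = ∫₀¹ t·Γ(n−t)/(Γ(n+1)·Γ(1−t)) dt`. -/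
noncomputable def cGreg (n : ℕ) : ℝ :=
  ∫ t in (0 : ℝ)..1, t * Real.Gamma ((n : ℝ) - t) /
    (Real.Gamma ((n : ℝ) + 1) * Real.Gamma (1 - t))

/-- The function `h(z) = 1 + z/log(1−z)` for `z ≠ 0`, with `h(0) = 0`. -/
noncomputable def hFun (z : ℂ) : ℂ :=
  if z = 0 then 0 else 1 + z / Complex.log (1 - z)

/-!
With `L = log (1 - z)` one has `∫₀¹ (1 - z) ^ t dt = (exp L - 1) / L = -z / L`, so
`h z = 1 - ∫₀¹ (1 - z) ^ t dt`. The binomial series gives `(1 - z) ^ t = ∑ (-t)ₙ / n! • zⁿ` with the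
rising factorial `(-t)ₙ = (-t)(1 - t)⋯(n - 1 - t) = Γ(n - t) / Γ(-t)`. For `t ∈ [0, 1]` these
coefficients lie in `[-1, 1]` and are `≤ 0` for `n ≥ 1`, so dominated convergence integrates the
series termwise, and `-∫₀¹ (-t)ₙ / n! dt = c_n`.
-/

open Polynomial Nat

theorem neg_one_pow_mul_choose_eq_ascPochhammer {R : Type*} [Field R] [CharZero R]
    (t : R) (n : ℕ) :
    (-1) ^ n * Ring.choose t n = (ascPochhammer R n).eval (-t) / n ! := by
  rw [← ascPochhammer_smeval_eq_eval, ascPochhammer_smeval_neg_eq_descPochhammer,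
    Ring.choose_eq_smul, Units.smul_def, zsmul_eq_mul, Int.cast_negOnePow_natCast, smul_eq_mul]
  ring

theorem ascPochhammer_eval_nonneg {S : Type*} [Semiring S] [PartialOrder S] [IsOrderedRing S]
    {s : S} (hs : 0 ≤ s) (n : ℕ) : 0 ≤ (ascPochhammer S n).eval s := by
  induction n with
  | zero => simp
  | succ n ih =>
    rw [ascPochhammer_succ_eval]
    exact mul_nonneg ih (add_nonneg hs n.cast_nonneg)

theorem abs_ascPochhammer_eval_neg_le_factorial {t : ℝ} (ht₀ : 0 ≤ t) (ht₁ : t ≤ 1) (n : ℕ) :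
    |(ascPochhammer ℝ n).eval (-t)| ≤ n ! := by
  induction n with
  | zero => simp
  | succ n ih =>
    rw [ascPochhammer_succ_eval, abs_mul, Nat.factorial_succ, Nat.cast_mul, mul_comm]
    have : |-t + n| ≤ n + 1 := abs_le.mpr ⟨by linarith, by linarith⟩
    push_cast
    gcongr

theorem ascPochhammer_eval_neg_nonpos {t : ℝ} (ht₀ : 0 ≤ t) (ht₁ : t ≤ 1) {n : ℕ} (hn : n ≠ 0) :
    (ascPochhammer ℝ n).eval (-t) ≤ 0 := by
  obtain ⟨n, rfl⟩ := Nat.exists_eq_succ_of_ne_zero hn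
  rw [ascPochhammer_succ_left, eval_mul, eval_X, eval_comp, eval_add, eval_X, eval_one,
    neg_mul, neg_nonpos]
  exact mul_nonneg ht₀ (ascPochhammer_eval_nonneg (by linarith) n)

theorem Real.Gamma_add_nat_eq_ascPochhammer_mul {x : ℝ} (hx : ∀ m : ℕ, x ≠ -m) (n : ℕ) :
    Real.Gamma (x + n) = (ascPochhammer ℝ n).eval x * Real.Gamma x := by
  induction n with
  | zero => simp
  | succ n ih =>
    have hxn : x + n ≠ 0 := fun h ↦ hx n (eq_neg_of_add_eq_zero_left h)
    rw [Nat.cast_succ, ← add_assoc, Real.Gamma_add_one hxn, ih, ascPochhammer_succ_eval]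
    ring

theorem hasSum_one_sub_cpow (t : ℝ) {z : ℂ} (hz : ‖z‖ < 1) :
    HasSum (fun n ↦ (((ascPochhammer ℝ n).eval (-t) / n ! : ℝ) : ℂ) * z ^ n)
      ((1 - z) ^ (t : ℂ)) := by
  have := Complex.one_add_cpow_hasFPowerSeriesOnBall_zero (a := t).hasSum (y := -z)
    (by simpa [← ofReal_norm] using hz)
  rw [zero_add] at this
  simp only [binomialSeries_apply, List.ofFn_const, List.prod_replicate, ← sub_eq_add_neg,
    ← Complex.ofReal_choose, neg_pow z, smul_eq_mul] at this
  refine this.congr_fun fun n ↦ ?_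
  rw [← neg_one_pow_mul_choose_eq_ascPochhammer]
  push_cast
  ring

theorem integral_one_sub_cpow {z : ℂ} (hz : z ≠ 1) :
    ∫ t in (0 : ℝ)..1, (1 - z) ^ (t : ℂ) = 1 - hFun z := by
  rcases eq_or_ne z 0 with rfl | hz0
  · simp [hFun]
  have h1z : 1 - z ≠ 0 := sub_ne_zero.mpr hz.symm
  have hlog : Complex.log (1 - z) ≠ 0 := by
    intro h
    have := Complex.exp_log h1z
    rw [h, Complex.exp_zero] at this
    exact hz0 (by linear_combination this)
  simp_rw [Complex.cpow_def_of_ne_zero h1z]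
  rw [integral_exp_mul_complex hlog, hFun, if_neg hz0]
  simp [Complex.exp_log h1z]
  field_simp

theorem cGreg_eq_integral (n : ℕ) :
    cGreg n = -∫ t in (0 : ℝ)..1, (ascPochhammer ℝ n).eval (-t) / n ! := by
  rw [cGreg, ← intervalIntegral.integral_neg]
  refine intervalIntegral.integral_congr_ae ?_
  filter_upwards [MeasureTheory.volume.ae_ne 1] with t ht₁ ht
  rw [Set.uIoc_of_le zero_le_one] at ht
  have hpole : ∀ m : ℕ, -t ≠ -m := by
    intro m hm
    have : (0 : ℝ) < m ∧ (m : ℝ) < 1 := by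
      constructor <;> linarith [ht.1, lt_of_le_of_ne ht.2 ht₁, neg_inj.mp hm]
    norm_cast at this
    omega
  have hΓ := Real.Gamma_add_nat_eq_ascPochhammer_mul hpole
  have hΓ0 : Real.Gamma (-t) ≠ 0 := Real.Gamma_ne_zero hpole
  have ht0 : t ≠ 0 := ht.1.ne'
  rw [show (n : ℝ) - t = -t + n by ring, show (1 : ℝ) - t = -t + (1 : ℕ) by push_cast; ring, hΓ, hΓ,
    Real.Gamma_nat_eq_factorial, ascPochhammer_one, eval_X]
  field_simp

theorem hasSum_cGreg_mul_pow {z : ℂ} (hz : ‖z‖ < 1) :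
    HasSum (fun n ↦ (cGreg n : ℂ) * z ^ n) (hFun z - 1) := by
  have hz1 : z ≠ 1 := by rintro rfl; simp at hz
  have key := intervalIntegral.hasSum_integral_of_dominated_convergence
    (μ := MeasureTheory.volume) (a := 0) (b := 1)
    (F := fun n (t : ℝ) ↦ (((ascPochhammer ℝ n).eval (-t) / n ! : ℝ) : ℂ) * z ^ n)
    (fun n _ ↦ ‖z‖ ^ n) (fun n ↦ by fun_prop) ?_ ?_ ?_
    (Filter.Eventually.of_forall fun t _ ↦ hasSum_one_sub_cpow t hz)
  · rw [integral_one_sub_cpow hz1] at key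
    refine (neg_sub (1 : ℂ) (hFun z) ▸ key.neg).congr_fun fun n ↦ ?_
    rw [intervalIntegral.integral_mul_const, intervalIntegral.integral_ofReal, cGreg_eq_integral]
    push_cast
    ring
  · refine fun n ↦ Filter.Eventually.of_forall fun t ht ↦ ?_
    rw [Set.uIoc_of_le zero_le_one] at ht
    rw [norm_mul, norm_pow, Complex.norm_real, Real.norm_eq_abs, abs_div, Nat.abs_cast]
    exact mul_le_of_le_one_left (by positivity) <| (div_le_one (by positivity)).mpr <|
      abs_ascPochhammer_eval_neg_le_factorial ht.1.le ht.2 n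
  · exact Filter.Eventually.of_forall fun _ _ ↦ summable_geometric_of_lt_one (norm_nonneg z) hz
  · exact intervalIntegrable_const

theorem cGreg_zero : cGreg 0 = -1 := by
  simp [cGreg_eq_integral]

theorem cGreg_nonneg {n : ℕ} (hn : n ≠ 0) : 0 ≤ cGreg n := by
  rw [cGreg_eq_integral, ← intervalIntegral.integral_neg]
  refine intervalIntegral.integral_nonneg zero_le_one fun t ht ↦ ?_
  rw [← neg_div]
  exact div_nonneg (neg_nonneg.mpr (ascPochhammer_eval_neg_nonpos ht.1 ht.2 hn)) (by positivity)

theorem abs_cGreg_le_one (n : ℕ) : |cGreg n| ≤ 1 := by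
  rw [cGreg_eq_integral, abs_neg, ← Real.norm_eq_abs]
  refine (intervalIntegral.norm_integral_le_of_norm_le_const (C := 1) fun t ht ↦ ?_).trans_eq
    (by simp)
  rw [Set.uIoc_of_le zero_le_one] at ht
  rw [Real.norm_eq_abs, abs_div, Nat.abs_cast, div_le_one (by positivity)]
  exact abs_ascPochhammer_eval_neg_le_factorial ht.1.le ht.2 n

/-- `cGreg 0 = -1`, so the constant term of the series of `hFun` is replaced by `hFun 0 = 0`. -/
noncomputable def hFunCoeff : ℕ → ℝ := Function.update cGreg 0 0

theorem hasSum_hFunCoeff_mul_pow {z : ℂ} (hz : ‖z‖ < 1) :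
    HasSum (fun n ↦ (hFunCoeff n : ℂ) * z ^ n) (hFun z) := by
  have h := (hasSum_cGreg_mul_pow hz).update 0 0
  rw [cGreg_zero, show (0 : ℂ) - ((-1 : ℝ) : ℂ) * z ^ 0 + (hFun z - 1) = hFun z by push_cast; ring]
    at h
  refine h.congr_fun fun n ↦ ?_
  rcases eq_or_ne n 0 with rfl | hn
  · simp [hFunCoeff]
  · simp [hFunCoeff, hn]

theorem hFunCoeff_nonneg (n : ℕ) : 0 ≤ hFunCoeff n := by
  rcases eq_or_ne n 0 with rfl | hn
  · simp [hFunCoeff]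
  · simpa [hFunCoeff, hn] using cGreg_nonneg hn

theorem abs_hFunCoeff_le_one (n : ℕ) : |hFunCoeff n| ≤ 1 := by
  rcases eq_or_ne n 0 with rfl | hn
  · simp [hFunCoeff]
  · simpa [hFunCoeff, hn] using abs_cGreg_le_one n

/-- `h` is analytic on the unit disc, its `n`-th Taylor coefficient at `0` equals
`c_n = ∫₀¹ t·Γ(n−t)/(Γ(n+1)·Γ(1−t)) dt` for `n ≥ 1`; in particular all Taylor
coefficients of `h` are nonnegative (real). -/
theorem hFun_taylor_coeff :
    ∃ p : FormalMultilinearSeries ℂ ℂ ℂ, HasFPowerSeriesOnBall hFun p 0 1 ∧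
      (∀ n : ℕ, 1 ≤ n → p.coeff n = ((cGreg n : ℝ) : ℂ)) ∧
      (∀ n : ℕ, (p.coeff n).im = 0 ∧ 0 ≤ (p.coeff n).re) := by
  set p := FormalMultilinearSeries.ofScalars ℂ fun n ↦ (hFunCoeff n : ℂ)
  have hcoeff (n : ℕ) : p.coeff n = hFunCoeff n := FormalMultilinearSeries.coeff_ofScalars
  have hradius : 1 ≤ p.radius := by
    simpa using p.le_radius_of_bound 1 (r := 1) fun n ↦ by
      simpa [p, FormalMultilinearSeries.ofScalars_norm] using abs_hFunCoeff_le_one n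
  refine ⟨p, ⟨hradius, one_pos, fun {y} hy ↦ ?_⟩, fun n hn ↦ ?_, fun n ↦ ?_⟩
  · simpa [p, FormalMultilinearSeries.ofScalars_apply_eq, mul_comm] using
      hasSum_hFunCoeff_mul_pow (by simpa [← ofReal_norm] using hy)
  · simp [hcoeff, hFunCoeff, Nat.one_le_iff_ne_zero.mp hn]
  · simpa [hcoeff] using hFunCoeff_nonneg n
end

section
/- Let c_n = ∫₀¹ t·Γ(n−t)/(Γ(n+1)·Γ(1−t)) dt for n ≥ 1. Then c_n ~ 1/(n·(log n)²) as n → ∞; that is, n·(log n)²·c_n → 1 as n → ∞. -/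
/-!
With `ρ(x, t) = x ^ t Γ(x - t) / (Γ(x) Γ(1 - t))` the integrand of `c_n` is `t n⁻ᵗ ρ(n, t) / n`.
Log-convexity of `Γ` gives Gautschi's inequality `Γ(x) ≤ x ^ t Γ(x - t) ≤ 2 ^ t Γ(x)` for
`x ≥ 2`, `0 ≤ t ≤ 1`, and since `Γ ≥ 1` on `(0, 1]` this squeezes `ρ(x, t)` into `(0, 2]` and
forces `ρ(x, t) → 1` as `x → ∞`, `t → 0⁺`. The substitution `t = s / log n` turns
`n (log n)² c_n` into `∫₀^{log n} s e⁻ˢ ρ(n, s / log n) ds`, which tends to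
`∫₀^∞ s e⁻ˢ ds = Γ(2) = 1` by dominated convergence.
-/

open Filter Topology

open Set MeasureTheory

namespace Real

theorem Gamma_mul_add_mul_le_rpow_Gamma_mul_rpow_Gamma_of_nonneg {x y a b : ℝ} (hx : 0 < x)
    (hy : 0 < y) (ha : 0 ≤ a) (hb : 0 ≤ b) (hab : a + b = 1) :
    Gamma (a * x + b * y) ≤ Gamma x ^ a * Gamma y ^ b := by
  have hΓx := Gamma_pos_of_pos hx
  have hΓy := Gamma_pos_of_pos hy
  have hxy : 0 < a * x + b * y := by
    rcases ha.eq_or_lt with rfl | ha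
    · simp_all
    · positivity
  have h := convexOn_log_Gamma.2 (mem_Ioi.2 hx) (mem_Ioi.2 hy) ha hb hab
  simp only [Function.comp_apply, smul_eq_mul] at h
  rwa [← log_rpow hΓx, ← log_rpow hΓy, ← log_mul (by positivity) (by positivity),
    log_le_log_iff (Gamma_pos_of_pos hxy) (by positivity)] at h

theorem Gamma_le_rpow_mul_Gamma_sub {x t : ℝ} (ht₀ : 0 ≤ t) (ht₁ : t ≤ 1) (htx : t < x) :
    Gamma x ≤ (x - t) ^ t * Gamma (x - t) := by
  have hxt : 0 < x - t := sub_pos.2 htx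
  have h := Gamma_mul_add_mul_le_rpow_Gamma_mul_rpow_Gamma_of_nonneg
    (by linarith : 0 < x - t + 1) hxt ht₀ (sub_nonneg.2 ht₁) (add_sub_cancel t 1)
  rwa [Gamma_add_one hxt.ne', mul_rpow hxt.le (Gamma_pos_of_pos hxt).le, mul_assoc,
    ← rpow_add (Gamma_pos_of_pos hxt), add_sub_cancel, rpow_one,
    show t * (x - t + 1) + (1 - t) * (x - t) = x by ring] at h

theorem rpow_mul_Gamma_sub_le {x t : ℝ} (hx : 1 < x) (ht₀ : 0 ≤ t) (ht₁ : t ≤ 1) :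
    (x - 1) ^ t * Gamma (x - t) ≤ Gamma x := by
  have hx₁ : 0 < x - 1 := sub_pos.2 hx
  have h := Gamma_mul_add_mul_le_rpow_Gamma_mul_rpow_Gamma_of_nonneg (by linarith : 0 < x) hx₁
    (sub_nonneg.2 ht₁) ht₀ (sub_add_cancel 1 t)
  rw [show (1 - t) * x + t * (x - 1) = x - t by ring] at h
  calc (x - 1) ^ t * Gamma (x - t)
      ≤ (x - 1) ^ t * (Gamma x ^ (1 - t) * Gamma (x - 1) ^ t) := by gcongr
    _ = Gamma x ^ (1 - t) * ((x - 1) * Gamma (x - 1)) ^ t := by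
      rw [mul_rpow hx₁.le (Gamma_pos_of_pos hx₁).le]; ring
    _ = Gamma x := by
      rw [← Gamma_add_one hx₁.ne', sub_add_cancel,
        ← rpow_add (Gamma_pos_of_pos (by linarith)), sub_add_cancel, rpow_one]

theorem one_le_Gamma_of_mem_Ioc {x : ℝ} (hx : x ∈ Ioc 0 1) : 1 ≤ Gamma x :=
  Gamma_one ▸ Gamma_strictAntiOn_Ioc.antitoneOn hx ⟨one_pos, le_rfl⟩ hx.2

theorem rpow_mul_Gamma_sub_le_two_rpow_mul {x t : ℝ} (hx : 2 ≤ x) (ht₀ : 0 ≤ t) (ht₁ : t ≤ 1) :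
    x ^ t * Gamma (x - t) ≤ 2 ^ t * Gamma x := by
  have hx₁ : 0 < x - 1 := by linarith
  calc x ^ t * Gamma (x - t) ≤ (2 * (x - 1)) ^ t * Gamma (x - t) := by
        gcongr
        · exact (Gamma_pos_of_pos (by linarith)).le
        · linarith
    _ = 2 ^ t * ((x - 1) ^ t * Gamma (x - t)) := by
        rw [mul_rpow zero_le_two hx₁.le, mul_assoc]
    _ ≤ 2 ^ t * Gamma x := by gcongr; exact rpow_mul_Gamma_sub_le (by linarith) ht₀ ht₁

end Real

open Real

noncomputable def normalizedGammaRatio (x t : ℝ) : ℝ :=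
  x ^ t * Gamma (x - t) / (Gamma x * Gamma (1 - t))

theorem inv_Gamma_one_sub_le_normalizedGammaRatio {x t : ℝ} (ht₀ : 0 ≤ t) (ht₁ : t < 1)
    (htx : t < x) : (Gamma (1 - t))⁻¹ ≤ normalizedGammaRatio x t := by
  have hx : 0 < x := ht₀.trans_lt htx
  have hΓ := Gamma_pos_of_pos (sub_pos.2 ht₁)
  rw [normalizedGammaRatio, ← div_div, inv_eq_one_div,
    div_le_div_iff_of_pos_right hΓ, one_le_div (Gamma_pos_of_pos hx)]
  calc Gamma x ≤ (x - t) ^ t * Gamma (x - t) := Gamma_le_rpow_mul_Gamma_sub ht₀ ht₁.le htx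
    _ ≤ x ^ t * Gamma (x - t) := by
      have := Gamma_pos_of_pos (sub_pos.2 htx)
      gcongr
      linarith

theorem normalizedGammaRatio_le_two_rpow_div {x t : ℝ} (hx : 2 ≤ x) (ht₀ : 0 ≤ t) (ht₁ : t < 1) :
    normalizedGammaRatio x t ≤ 2 ^ t / Gamma (1 - t) := by
  rw [normalizedGammaRatio, ← div_div,
    div_le_div_iff_of_pos_right (Gamma_pos_of_pos (sub_pos.2 ht₁)),
    div_le_iff₀ (Gamma_pos_of_pos (by linarith))]
  exact rpow_mul_Gamma_sub_le_two_rpow_mul hx ht₀ ht₁.le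

theorem abs_normalizedGammaRatio_le_two {x t : ℝ} (hx : 2 ≤ x) (ht₀ : 0 ≤ t) (ht₁ : t < 1) :
    |normalizedGammaRatio x t| ≤ 2 := by
  have hΓ : 1 ≤ Gamma (1 - t) := one_le_Gamma_of_mem_Ioc ⟨by linarith, by linarith⟩
  have hpos : 0 < normalizedGammaRatio x t :=
    (inv_pos.2 (by linarith)).trans_le
      (inv_Gamma_one_sub_le_normalizedGammaRatio ht₀ ht₁ (by linarith))
  rw [abs_of_pos hpos]
  calc normalizedGammaRatio x t ≤ 2 ^ t / Gamma (1 - t) :=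
        normalizedGammaRatio_le_two_rpow_div hx ht₀ ht₁
    _ ≤ 2 ^ t := div_le_self (by positivity) hΓ
    _ ≤ 2 ^ (1 : ℝ) := rpow_le_rpow_of_exponent_le one_le_two ht₁.le
    _ = 2 := rpow_one 2

theorem tendsto_normalizedGammaRatio :
    Tendsto (fun p : ℝ × ℝ => normalizedGammaRatio p.1 p.2) (atTop ×ˢ 𝓝[≥] 0) (𝓝 1) := by
  have hΓ : Tendsto (fun t : ℝ => Gamma (1 - t)) (𝓝[≥] 0) (𝓝 1) := by
    have h₁ : ContinuousAt Gamma 1 := (differentiableAt_Gamma fun m h => by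
      linarith [(Nat.cast_nonneg m : (0 : ℝ) ≤ m)]).continuousAt
    have hc : ContinuousAt (fun t : ℝ => Gamma (1 - t)) 0 :=
      h₁.comp_of_eq (by fun_prop) (sub_zero 1)
    have := hc.tendsto.mono_left (nhdsWithin_le_nhds (s := Ici 0))
    rwa [sub_zero, Gamma_one] at this
  have hlow : Tendsto (fun t : ℝ => (Gamma (1 - t))⁻¹) (𝓝[≥] 0) (𝓝 1) := by
    simpa using hΓ.inv₀ one_ne_zero
  have hup : Tendsto (fun t : ℝ => 2 ^ t / Gamma (1 - t)) (𝓝[≥] 0) (𝓝 1) := by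
    have h2 : Tendsto (fun t : ℝ => (2 : ℝ) ^ t) (𝓝[≥] 0) (𝓝 1) := by
      simpa using ((continuous_const_rpow two_ne_zero).tendsto 0).mono_left nhdsWithin_le_nhds
    simpa [div_eq_mul_inv] using h2.mul hlow
  have hev : ∀ᶠ p : ℝ × ℝ in atTop ×ˢ 𝓝[≥] 0, 2 ≤ p.1 ∧ p.2 ∈ Ico 0 1 :=
    (eventually_ge_atTop 2).prod_mk (Ico_mem_nhdsGE one_pos)
  refine tendsto_of_tendsto_of_tendsto_of_le_of_le' (hlow.comp tendsto_snd) (hup.comp tendsto_snd)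
    ?_ ?_
  · filter_upwards [hev] with p ⟨hx, ht₀, ht₁⟩
    exact inv_Gamma_one_sub_le_normalizedGammaRatio ht₀ ht₁ (by linarith)
  · filter_upwards [hev] with p ⟨hx, ht₀, ht₁⟩
    exact normalizedGammaRatio_le_two_rpow_div hx ht₀ ht₁

theorem continuousOn_normalizedGammaRatio {x : ℝ} (hx : 1 ≤ x) :
    ContinuousOn (normalizedGammaRatio x) (Iio 1) := by
  have hΓ : ∀ y : ℝ, 0 < y → ContinuousAt Gamma y := fun y hy =>
    (differentiableAt_Gamma fun m h => by linarith [(Nat.cast_nonneg m : (0 : ℝ) ≤ m)]).continuousAt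
  intro t (ht : t < 1)
  refine ContinuousAt.continuousWithinAt (ContinuousAt.div ?_ ?_ ?_)
  · exact (continuous_const_rpow (by linarith : x ≠ 0)).continuousAt.mul
      ((hΓ _ (by linarith)).comp_of_eq (by fun_prop) rfl)
  · exact continuousAt_const.mul ((hΓ _ (by linarith)).comp_of_eq (by fun_prop) rfl)
  · exact mul_ne_zero (Gamma_pos_of_pos (by linarith)).ne' (Gamma_pos_of_pos (by linarith)).ne'

theorem div_log_mem_Ico {n : ℕ} {s : ℝ} (hs : s ∈ Ioo 0 (log n)) : s / log n ∈ Ico 0 1 :=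
  ⟨div_nonneg hs.1.le (log_natCast_nonneg n), (div_lt_one (hs.1.trans hs.2)).2 hs.2⟩

theorem tendsto_normalizedGammaRatio_div_log {s : ℝ} (hs : 0 ≤ s) :
    Tendsto (fun n : ℕ => normalizedGammaRatio n (s / log n)) atTop (𝓝 1) := by
  have h0 : Tendsto (fun n : ℕ => s / log n) atTop (𝓝 0) :=
    tendsto_const_nhds.div_atTop (tendsto_log_atTop.comp tendsto_natCast_atTop_atTop)
  have hlog : Tendsto (fun n : ℕ => s / log n) atTop (𝓝[≥] 0) :=
    tendsto_nhdsWithin_iff.2 ⟨h0, Eventually.of_forall fun n =>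
      mem_Ici.2 (div_nonneg hs (log_natCast_nonneg n))⟩
  have hpair : Tendsto (fun n : ℕ => ((n : ℝ), s / log n)) atTop (atTop ×ˢ 𝓝[≥] 0) :=
    tendsto_natCast_atTop_atTop.prodMk hlog
  exact (tendsto_normalizedGammaRatio.comp hpair :)

theorem intervalIntegral.integral_mul_comp_div {c : ℝ} (hc : c ≠ 0) (f : ℝ → ℝ) :
    ∫ s in 0..c, s * f (s / c) = c ^ 2 * ∫ t in 0..1, t * f t := by
  have h := intervalIntegral.integral_comp_div (fun t => t * f t) (a := 0) (b := c) hc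
  rw [zero_div, div_self hc, smul_eq_mul] at h
  rw [sq, mul_assoc, ← h, ← intervalIntegral.integral_const_mul]
  congr 1 with s
  field_simp

theorem integrand_cGreg_eq {x : ℝ} (hx : 0 < x) (t : ℝ) :
    t * Gamma (x - t) / (Gamma (x + 1) * Gamma (1 - t))
      = t * (x ^ (-t) * normalizedGammaRatio x t) / x := by
  have hxt : x ^ t ≠ 0 := (rpow_pos_of_pos hx t).ne'
  rw [normalizedGammaRatio, Gamma_add_one hx.ne', rpow_neg hx.le]
  field_simp

theorem natCast_mul_cGreg {n : ℕ} (hn : 0 < n) :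
    n * cGreg n = ∫ t in 0..1, t * ((n : ℝ) ^ (-t) * normalizedGammaRatio n t) := by
  have hn' : (0 : ℝ) < n := Nat.cast_pos.2 hn
  simp_rw [cGreg, integrand_cGreg_eq hn', intervalIntegral.integral_div]
  field_simp

theorem natCast_mul_log_sq_mul_cGreg {n : ℕ} (hn : 2 ≤ n) :
    n * log n ^ 2 * cGreg n
      = ∫ s in 0..log n, s * exp (-s) * normalizedGammaRatio n (s / log n) := by
  have hn' : (1 : ℝ) < n := by exact_mod_cast hn
  have hL : log n ≠ 0 := (log_pos hn').ne'
  rw [mul_comm _ (log n ^ 2), mul_assoc, natCast_mul_cGreg (by omega),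
    ← intervalIntegral.integral_mul_comp_div hL]
  congr 1 with s
  rw [rpow_def_of_pos (by linarith), mul_neg, mul_div_cancel₀ s hL, mul_assoc]

theorem tendsto_intervalIntegral_mul_of_dominated {ι : Type*} {l : Filter ι}
    [l.IsCountablyGenerated] {f : ℝ → ℝ} {F : ι → ℝ → ℝ} {b : ι → ℝ} {C : ℝ}
    (hf : IntegrableOn f (Ioi 0)) (hb : Tendsto b l atTop)
    (hF_cont : ∀ᶠ i in l, ContinuousOn (F i) (Ioo 0 (b i)))
    (hF_le : ∀ᶠ i in l, ∀ s ∈ Ioo 0 (b i), ‖F i s‖ ≤ C)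
    (hF_lim : ∀ s, 0 < s → Tendsto (fun i => F i s) l (𝓝 1)) :
    Tendsto (fun i => ∫ s in 0..b i, f s * F i s) l (𝓝 (∫ s in Ioi 0, f s)) := by
  set G : ι → ℝ → ℝ := fun i => (Ioo 0 (b i)).indicator fun s => f s * F i s
  have hG : ∀ᶠ i in l, ∫ s in Ioi 0, G i s = ∫ s in 0..b i, f s * F i s := by
    filter_upwards [hb.eventually_ge_atTop 0] with i hi
    rw [intervalIntegral.integral_of_le hi, integral_Ioc_eq_integral_Ioo,
      setIntegral_indicator measurableSet_Ioo, inter_eq_self_of_subset_right Ioo_subset_Ioi_self]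
  refine (tendsto_integral_filter_of_dominated_convergence (fun s => ‖f s‖ * |C|)
    ?_ ?_ (hf.norm.mul_const _) ?_).congr' hG
  · filter_upwards [hF_cont] with i hi
    rw [aestronglyMeasurable_indicator_iff measurableSet_Ioo,
      Measure.restrict_restrict measurableSet_Ioo]
    exact (hf.aestronglyMeasurable.mono_measure
      (Measure.restrict_mono inter_subset_right le_rfl)).mul
      ((hi.aestronglyMeasurable measurableSet_Ioo).mono_measure
        (Measure.restrict_mono inter_subset_left le_rfl))
  · filter_upwards [hF_le] with i hi
    refine Eventually.of_forall fun s => ?_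
    simp only [G]
    by_cases hs : s ∈ Ioo 0 (b i)
    · rw [indicator_of_mem hs, norm_mul]
      exact mul_le_mul_of_nonneg_left ((hi s hs).trans (le_abs_self C)) (norm_nonneg _)
    · rw [indicator_of_notMem hs, norm_zero]
      positivity
  · filter_upwards [ae_restrict_mem measurableSet_Ioi] with s hs
    have h := (hF_lim s hs).const_mul (f s)
    rw [mul_one] at h
    refine h.congr' ?_
    filter_upwards [hb.eventually_gt_atTop s] with i hi
    simp only [G]
    have hmem : s ∈ Ioo 0 (b i) := ⟨hs, hi⟩
    rw [indicator_of_mem hmem]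

theorem integral_mul_exp_neg_Ioi : ∫ s in Ioi 0, s * exp (-s) = 1 := by
  have h := integral_rpow_mul_exp_neg_mul_Ioi (a := 2) two_pos one_pos
  norm_num at h
  exact h

theorem integrableOn_mul_exp_neg_Ioi : IntegrableOn (fun s : ℝ => s * exp (-s)) (Ioi 0) := by
  refine (GammaIntegral_convergent two_pos).congr_fun (fun s _ => ?_) measurableSet_Ioi
  norm_num [mul_comm]

/-- The asymptotic relation `c_n ~ 1/(n·(log n)²)`, i.e. `n·(log n)²·c_n → 1`. -/
theorem cGreg_asymptotic :
    Tendsto (fun n : ℕ => (n : ℝ) * (Real.log n) ^ 2 * cGreg n) atTop (𝓝 1) := by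
  have hcont : ∀ᶠ n : ℕ in atTop,
      ContinuousOn (fun s => normalizedGammaRatio n (s / log n)) (Ioo 0 (log n)) := by
    filter_upwards [eventually_ge_atTop 1] with n hn
    exact (continuousOn_normalizedGammaRatio (by exact_mod_cast hn)).comp
      (continuousOn_id.div_const _) fun s hs => (div_log_mem_Ico hs).2
  have hbound : ∀ᶠ n : ℕ in atTop,
      ∀ s ∈ Ioo 0 (log n), ‖normalizedGammaRatio n (s / log n)‖ ≤ 2 := by
    filter_upwards [eventually_ge_atTop 2] with n hn s hs
    exact abs_normalizedGammaRatio_le_two (by exact_mod_cast hn) (div_log_mem_Ico hs).1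
      (div_log_mem_Ico hs).2
  have h := tendsto_intervalIntegral_mul_of_dominated integrableOn_mul_exp_neg_Ioi
    (tendsto_log_atTop.comp tendsto_natCast_atTop_atTop) hcont hbound
    fun s hs => tendsto_normalizedGammaRatio_div_log hs.le
  rw [integral_mul_exp_neg_Ioi] at h
  refine h.congr' ?_
  filter_upwards [eventually_ge_atTop 2] with n hn
  exact (natCast_mul_log_sq_mul_cGreg hn).symm
end

section
/- Let c_n = ∫₀¹ t·Γ(n−t)/(Γ(n+1)·Γ(1−t)) dt for n ≥ 1. Then for every u ∈ 𝔻 the series Σ_{n=1}^∞ c_n·u^n converges absolutely, its sum equals 1 + u/log(1−u) for u ≠ 0 (and equals 0 for u = 0, with log the principal branch), and moreover Σ_{n=1}^∞ c_n ≤ 1. -/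
/-!
For `0 < t < 1` the integrand of `c_{n+1}` is `(-1)ⁿ (t choose n+1)`, by `Γ(s+1) = s Γ(s)`.
Integrating the binomial series `(1 - u)ᵗ - 1 = Σ_{n ≥ 1} (t choose n) (-u)ⁿ` over `t ∈ [0, 1]`
(dominated by `Σ |u|ⁿ`, as `|t choose n| ≤ 1`) gives
`Σ cₙ uⁿ = 1 - ∫₀¹ (1 - u)ᵗ dt = 1 + u / log (1 - u)`.
The coefficients are nonnegative, and `1 + r / log (1 - r) < 1` for `0 < r < 1`, so letting
`r → 1⁻` bounds every partial sum of `Σ cₙ` by `1`.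
-/

open Complex

open Finset MeasureTheory Filter Topology

theorem Ring.choose_eq_prod_range_div {K : Type*} [Field K] [CharZero K] (a : K) (n : ℕ) :
    Ring.choose a n = (∏ j ∈ range n, (a - j)) / n.factorial := by
  rw [Ring.choose_eq_smul, ← descPochhammer_eval_eq_prod_range, ← Polynomial.aeval_eq_smeval,
    Polynomial.aeval_def, ← Polynomial.eval_map, descPochhammer_map, smul_eq_mul, inv_mul_eq_div]

theorem Ring.choose_succ_eq_mul_div {K : Type*} [Field K] [CharZero K] (a : K) (n : ℕ) :
    Ring.choose a (n + 1) = Ring.choose a n * (a - n) / (n + 1) := by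
  simp only [Ring.choose_eq_prod_range_div, prod_range_succ, Nat.factorial_succ]
  push_cast
  field_simp

theorem Real.continuous_choose (n : ℕ) : Continuous fun t : ℝ => Ring.choose t n := by
  simp_rw [Ring.choose_eq_prod_range_div]
  fun_prop

theorem Real.abs_choose_le_one {t : ℝ} (ht₀ : 0 ≤ t) (ht₁ : t ≤ 1) (n : ℕ) :
    |Ring.choose t n| ≤ 1 := by
  induction n with
  | zero => simp
  | succ n ih =>
    have hn : (0 : ℝ) < n + 1 := by positivity
    have h : |t - n| ≤ n + 1 := abs_le.mpr ⟨by linarith, by linarith⟩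
    rw [Ring.choose_succ_eq_mul_div, abs_div, abs_mul, abs_of_pos hn, div_le_one hn]
    calc |Ring.choose t n| * |t - n| ≤ 1 * (n + 1) := by gcongr
      _ = n + 1 := one_mul _

theorem Complex.hasSum_choose_mul_pow (a : ℂ) {v : ℂ} (hv : ‖v‖ < 1) :
    HasSum (fun n => Ring.choose a n * v ^ n) ((1 + v) ^ a) := by
  have := one_add_cpow_hasFPowerSeriesOnBall_zero (a := a) |>.hasSum
    (y := v) (by simpa [Metric.mem_eball, edist_zero_right, ← ofReal_norm] using hv)
  simpa [binomialSeries, FormalMultilinearSeries.coeff_ofScalars, mul_comm] using this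

theorem Complex.integral_cpow_ofReal {z : ℂ} (hz₀ : z ≠ 0) (hz₁ : z ≠ 1) :
    ∫ t in (0 : ℝ)..1, z ^ (t : ℂ) = (z - 1) / log z := by
  have hlog : log z ≠ 0 := fun h => hz₁ (by rw [← exp_log hz₀, h, exp_zero])
  simp_rw [cpow_def_of_ne_zero hz₀]
  rw [integral_exp_mul_complex hlog]
  push_cast
  rw [mul_one, mul_zero, exp_log hz₀, exp_zero]

theorem Real.mul_Gamma_div_eq_neg_one_pow_mul_choose {t : ℝ} (ht : t < 1) (n : ℕ) :
    t * Gamma (n + 1 - t) / (Gamma (n + 1 + 1) * Gamma (1 - t)) =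
      (-1) ^ n * Ring.choose t (n + 1) := by
  have hG : Gamma (1 - t) ≠ 0 := (Gamma_pos_of_pos (by linarith)).ne'
  induction n with
  | zero => simp [hG, one_add_one_eq_two]
  | succ n ih =>
    have hn : (n : ℝ) + 1 - t ≠ 0 := by have := n.cast_nonneg (α := ℝ); linarith
    have hn' : (n : ℝ) + 1 + 1 ≠ 0 := by positivity
    push_cast
    calc t * Gamma (n + 1 + 1 - t) / (Gamma (n + 1 + 1 + 1) * Gamma (1 - t))
        = t * Gamma (n + 1 - t) / (Gamma (n + 1 + 1) * Gamma (1 - t)) *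
            ((n + 1 - t) / (n + 1 + 1)) := by
          rw [show (n : ℝ) + 1 + 1 - t = n + 1 - t + 1 by ring, Gamma_add_one hn,
            Gamma_add_one hn']
          field_simp
      _ = (-1) ^ (n + 1) * Ring.choose t (n + 1 + 1) := by
          rw [ih, Ring.choose_succ_eq_mul_div t (n + 1)]
          push_cast
          ring

-- Only almost everywhere: at `t = 1` the left integrand is `x / Γ 0 = x / 0 = 0`.
theorem cGreg_succ_eq_integral_choose (n : ℕ) :
    cGreg (n + 1) = (-1) ^ n * ∫ t in (0 : ℝ)..1, Ring.choose t (n + 1) := by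
  rw [cGreg, ← intervalIntegral.integral_const_mul]
  refine intervalIntegral.integral_congr_ae ?_
  filter_upwards [(Set.countable_singleton (1 : ℝ)).ae_notMem volume] with t ht₁ ht
  rw [Set.uIoc_of_le zero_le_one] at ht
  push_cast
  exact Real.mul_Gamma_div_eq_neg_one_pow_mul_choose (lt_of_le_of_ne ht.2 ht₁) n

theorem cGreg_succ_nonneg (n : ℕ) : 0 ≤ cGreg (n + 1) := by
  refine intervalIntegral.integral_nonneg zero_le_one fun t ⟨ht₀, ht₁⟩ => ?_
  have : (0 : ℝ) ≤ (n + 1 : ℕ) - t := by push_cast; linarith [n.cast_nonneg (α := ℝ)]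
  have := Real.Gamma_nonneg_of_nonneg this
  have := Real.Gamma_nonneg_of_nonneg (sub_nonneg.mpr ht₁)
  positivity

theorem cGreg_succ_le_one (n : ℕ) : cGreg (n + 1) ≤ 1 := by
  have h := intervalIntegral.norm_integral_le_of_norm_le_const (a := 0) (b := 1) (C := 1)
    (f := fun t => Ring.choose t (n + 1)) fun t ht => by
      rw [Set.uIoc_of_le zero_le_one] at ht
      exact Real.abs_choose_le_one ht.1.le ht.2 _
  rw [cGreg_succ_eq_integral_choose]
  calc _ ≤ |(-1) ^ n * ∫ t in (0 : ℝ)..1, Ring.choose t (n + 1)| := le_abs_self _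
    _ ≤ 1 := by simpa using h

theorem hasSum_integral_choose_mul_pow {v : ℂ} (hv : ‖v‖ < 1) :
    HasSum (fun n => ∫ t in (0 : ℝ)..1, ((Ring.choose t (n + 1) : ℝ) : ℂ) * v ^ (n + 1))
      (∫ t in (0 : ℝ)..1, ((1 + v) ^ (t : ℂ) - 1)) := by
  refine intervalIntegral.hasSum_integral_of_dominated_convergence (fun n _ => ‖v‖ ^ (n + 1))
    (fun n => ((continuous_ofReal.comp (Real.continuous_choose _)).mul
      continuous_const).aestronglyMeasurable)
    (fun n => ae_of_all _ fun t ht => ?_)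
    (ae_of_all _ fun t _ => (summable_nat_add_iff 1).mpr
      (summable_geometric_of_lt_one (norm_nonneg v) hv))
    intervalIntegrable_const
    (ae_of_all _ fun t _ => ?_)
  · rw [Set.uIoc_of_le zero_le_one] at ht
    rw [norm_mul, norm_pow, norm_real, Real.norm_eq_abs]
    exact mul_le_of_le_one_left (by positivity) (Real.abs_choose_le_one ht.1.le ht.2 _)
  · have := (hasSum_nat_add_iff' 1).mpr (hasSum_choose_mul_pow (t : ℂ) hv)
    simpa [ofReal_choose] using this

theorem hasSum_cGreg_mul_pow_s18 {u : ℂ} (hu : ‖u‖ < 1) (hu₀ : u ≠ 0) :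
    HasSum (fun n => (cGreg (n + 1) : ℂ) * u ^ (n + 1)) (1 + u / log (1 - u)) := by
  have h₀ : 1 - u ≠ 0 := sub_ne_zero.mpr (by rintro rfl; simp at hu)
  have h₁ : 1 - u ≠ 1 := by simpa using hu₀
  have hsum := (hasSum_integral_choose_mul_pow (v := -u) (by simpa using hu)).neg
  have hterm (n : ℕ) : -∫ t in (0 : ℝ)..1, ((Ring.choose t (n + 1) : ℝ) : ℂ) * (-u) ^ (n + 1) =
      cGreg (n + 1) * u ^ (n + 1) := by
    rw [intervalIntegral.integral_mul_const, intervalIntegral.integral_ofReal,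
      cGreg_succ_eq_integral_choose]
    push_cast
    ring
  have hcont : Continuous fun t : ℝ => (1 - u) ^ (t : ℂ) :=
    continuous_ofReal.const_cpow (Or.inl h₀)
  rw [← sub_eq_add_neg, intervalIntegral.integral_sub (hcont.intervalIntegrable _ _)
    intervalIntegrable_const, integral_cpow_ofReal h₀ h₁, intervalIntegral.integral_const] at hsum
  simp_rw [hterm] at hsum
  rwa [sub_sub_cancel_left, sub_zero, one_smul, neg_sub, neg_div, sub_neg_eq_add] at hsum

theorem summable_norm_cGreg_mul_pow {u : ℂ} (hu : ‖u‖ < 1) :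
    Summable fun n => ‖(cGreg (n + 1) : ℂ) * u ^ (n + 1)‖ := by
  refine .of_nonneg_of_le (fun _ => norm_nonneg _) (fun n => ?_)
    ((summable_nat_add_iff 1).mpr (summable_geometric_of_lt_one (norm_nonneg u) hu))
  rw [norm_mul, norm_pow, norm_real, Real.norm_of_nonneg (cGreg_succ_nonneg n)]
  exact mul_le_of_le_one_left (by positivity) (cGreg_succ_le_one n)

theorem hasSum_cGreg_mul_pow_real {r : ℝ} (hr : |r| < 1) (hr₀ : r ≠ 0) :
    HasSum (fun n => cGreg (n + 1) * r ^ (n + 1)) (1 + r / Real.log (1 - r)) := by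
  have h := hasSum_cGreg_mul_pow_s18 (u := r) (by simpa using hr) (ofReal_ne_zero.mpr hr₀)
  rw [← ofReal_one, ← ofReal_sub, ← ofReal_log (by linarith [le_abs_self r])] at h
  exact_mod_cast h

theorem sum_range_cGreg_le_one (N : ℕ) : ∑ n ∈ range N, cGreg (n + 1) ≤ 1 := by
  have hr : ∀ r ∈ Set.Ioo (0 : ℝ) 1, ∑ n ∈ range N, cGreg (n + 1) * r ^ (n + 1) ≤ 1 := by
    rintro r ⟨hr₀, hr₁⟩
    have hlog : r / Real.log (1 - r) < 0 :=
      div_neg_of_pos_of_neg hr₀ (Real.log_neg (by linarith) (by linarith))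
    calc _ ≤ 1 + r / Real.log (1 - r) :=
          sum_le_hasSum _ (fun n _ => mul_nonneg (cGreg_succ_nonneg n) (by positivity))
            (hasSum_cGreg_mul_pow_real (abs_lt.mpr ⟨by linarith, hr₁⟩) hr₀.ne')
      _ ≤ 1 := by linarith
  have hlim : Tendsto (fun r : ℝ => ∑ n ∈ range N, cGreg (n + 1) * r ^ (n + 1)) (𝓝[<] 1)
      (𝓝 (∑ n ∈ range N, cGreg (n + 1))) := by
    have : Continuous fun r : ℝ => ∑ n ∈ range N, cGreg (n + 1) * r ^ (n + 1) := by fun_prop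
    simpa using (this.tendsto 1).mono_left nhdsWithin_le_nhds
  exact le_of_tendsto hlim (eventually_of_mem (Ioo_mem_nhdsLT zero_lt_one) hr)

/-- For every `u` in the unit disc, `Σ_{n≥1} c_n·uⁿ` converges absolutely with sum
`1 + u/log(1−u)` for `u ≠ 0` (and sum `0` for `u = 0`); moreover `Σ_{n≥1} c_n ≤ 1`. -/
theorem cGreg_series :
    (∀ u : ℂ, ‖u‖ < 1 →
      Summable (fun n : ℕ => ‖(cGreg (n + 1) : ℂ) * u ^ (n + 1)‖) ∧
      (∑' n : ℕ, (cGreg (n + 1) : ℂ) * u ^ (n + 1)) =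
        (if u = 0 then 0 else 1 + u / Complex.log (1 - u))) ∧
    Summable (fun n : ℕ => cGreg (n + 1)) ∧ (∑' n : ℕ, cGreg (n + 1)) ≤ 1 := by
  refine ⟨fun u hu => ⟨summable_norm_cGreg_mul_pow hu, ?_⟩,
    summable_of_sum_range_le cGreg_succ_nonneg sum_range_cGreg_le_one,
    Real.tsum_le_of_sum_range_le cGreg_succ_nonneg sum_range_cGreg_le_one⟩
  split_ifs with hu₀
  · simp [hu₀]
  · exact (hasSum_cGreg_mul_pow_s18 hu hu₀).tsum_eq
end

section
/- Let a ∈ (0,1). For z, w ∈ 𝔻 define k_a(z,w) = (1 − z·conj(w))^{−a} (principal branch; note Re(1 − z·conj(w)) > 0) and δ_a(z,w) = (1 − |k_a(z,w)|²/(k_a(z,z)·k_a(w,w)))^{1/2}. Then δ_a(z,w) = (1 − (1 − ρ(z,w)²)^a)^{1/2}, and a^{1/2}·ρ(z,w) ≤ δ_a(z,w) ≤ ρ(z,w) for all z, w ∈ 𝔻, where ρ(z,w) = |z−w|/|1−conj(z)·w| is the pseudohyperbolic metric on 𝔻. -/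
/-!
With `X = 1 - |z|²`, `Y = 1 - |w|²` and `A = |1 - z w̄|`, the kernel gives
`|k_a(z,w)|² / (k_a(z,z) k_a(w,w)) = (X Y / A²)^a`, and the identity
`|1 - z̄ w|² - |z - w|² = X Y` says that `X Y / A² = 1 - ρ(z,w)²`. This is the formula
for `δ_a`. The two bounds are then `t ≤ t^a ≤ 1 - a (1 - t)` for `t = 1 - ρ² ∈ [0,1]`,
the second being Bernoulli's inequality.
-/

open Complex

/-- The reproducing kernel `k_a(z,w) = (1 − z·conj w)^{−a}` of the weighted Dirichlet
space `𝒟_a` (principal branch powers). -/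
noncomputable def kA (a : ℝ) (z w : ℂ) : ℂ :=
  (1 - z * (starRingEnd ℂ) w) ^ (-(a : ℂ))

/-- The metric on the disc induced by `𝒟_a`. -/
noncomputable def deltaA (a : ℝ) (z w : ℂ) : ℝ :=
  Real.sqrt (1 - (‖kA a z w‖) ^ 2 / ((kA a z z).re * (kA a w w).re))

/-- The pseudohyperbolic metric on the unit disc. -/
noncomputable def rhoDisc (z w : ℂ) : ℝ :=
  ‖z - w‖ / ‖1 - (starRingEnd ℂ) z * w‖

open ComplexConjugate

section RealBounds

variable {r a : ℝ}

theorem sqrt_one_sub_rpow_one_sub_sq_le (hr0 : 0 ≤ r) (hr1 : r ≤ 1) (ha : a ≤ 1) :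
    Real.sqrt (1 - (1 - r ^ 2) ^ a) ≤ r := by
  have hle : 1 - r ^ 2 ≤ (1 - r ^ 2) ^ a :=
    Real.self_le_rpow_of_le_one (by nlinarith) (by nlinarith) ha
  calc Real.sqrt (1 - (1 - r ^ 2) ^ a) ≤ Real.sqrt (r ^ 2) := Real.sqrt_le_sqrt (by linarith)
    _ = r := Real.sqrt_sq hr0

theorem sqrt_mul_le_sqrt_one_sub_rpow_one_sub_sq (hr0 : 0 ≤ r) (hr1 : r ≤ 1)
    (ha0 : 0 ≤ a) (ha1 : a ≤ 1) :
    Real.sqrt a * r ≤ Real.sqrt (1 - (1 - r ^ 2) ^ a) := by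
  have bernoulli : (1 - r ^ 2) ^ a ≤ 1 - a * r ^ 2 := by
    have := rpow_one_add_le_one_add_mul_self (s := -r ^ 2) (by nlinarith) ha0 ha1
    rwa [← sub_eq_add_neg, mul_neg, ← sub_eq_add_neg] at this
  calc Real.sqrt a * r = Real.sqrt (a * r ^ 2) := by rw [Real.sqrt_mul ha0, Real.sqrt_sq hr0]
    _ ≤ Real.sqrt (1 - (1 - r ^ 2) ^ a) := Real.sqrt_le_sqrt (by linarith)

end RealBounds

theorem normSq_one_sub_conj_mul_sub_normSq_sub (z w : ℂ) :
    normSq (1 - conj z * w) - normSq (z - w) = (1 - normSq z) * (1 - normSq w) := by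
  simp only [normSq_apply, sub_re, sub_im, mul_re, mul_im, one_re, one_im, conj_re, conj_im]
  ring

theorem one_sub_normSq_pos {z : ℂ} (hz : ‖z‖ < 1) : 0 < 1 - normSq z := by
  rw [← Complex.sq_norm]
  nlinarith [norm_nonneg z]

theorem one_sub_mul_conj_ne_zero {z w : ℂ} (hz : ‖z‖ < 1) (hw : ‖w‖ < 1) :
    1 - z * conj w ≠ 0 := by
  have hlt : ‖z * conj w‖ < 1 := by
    rw [norm_mul, norm_conj]
    nlinarith [norm_nonneg z, norm_nonneg w]
  refine sub_ne_zero.mpr fun h => ?_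
  rw [← h, norm_one] at hlt
  exact lt_irrefl 1 hlt

theorem norm_one_sub_conj_mul (z w : ℂ) : ‖1 - conj z * w‖ = ‖1 - z * conj w‖ := by
  rw [← norm_conj (1 - conj z * w)]
  simp [mul_comm]

theorem one_sub_rhoDisc_sq {z w : ℂ} (hz : ‖z‖ < 1) (hw : ‖w‖ < 1) :
    1 - rhoDisc z w ^ 2 = (1 - normSq z) * (1 - normSq w) / ‖1 - z * conj w‖ ^ 2 := by
  have hA : ‖1 - z * conj w‖ ≠ 0 := norm_ne_zero_iff.mpr (one_sub_mul_conj_ne_zero hz hw)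
  rw [rhoDisc, div_pow, norm_one_sub_conj_mul, ← normSq_one_sub_conj_mul_sub_normSq_sub,
    ← Complex.sq_norm, ← Complex.sq_norm, norm_one_sub_conj_mul]
  field_simp

theorem rhoDisc_nonneg (z w : ℂ) : 0 ≤ rhoDisc z w := by
  unfold rhoDisc
  positivity

theorem rhoDisc_le_one {z w : ℂ} (hz : ‖z‖ < 1) (hw : ‖w‖ < 1) : rhoDisc z w ≤ 1 := by
  have h : 0 ≤ 1 - rhoDisc z w ^ 2 := by
    rw [one_sub_rhoDisc_sq hz hw]
    have := one_sub_normSq_pos hz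
    have := one_sub_normSq_pos hw
    positivity
  nlinarith [rhoDisc_nonneg z w]

theorem norm_kA (a : ℝ) (z w : ℂ) : ‖kA a z w‖ = ‖1 - z * conj w‖ ^ (-a) := by
  rw [kA, show -(a : ℂ) = ((-a : ℝ) : ℂ) by push_cast; ring, norm_cpow_real]

theorem kA_self_re (a : ℝ) {z : ℂ} (hz : ‖z‖ ≤ 1) : (kA a z z).re = (1 - normSq z) ^ (-a) := by
  have hX : 0 ≤ 1 - normSq z := by rw [← Complex.sq_norm]; nlinarith [norm_nonneg z]
  rw [kA, mul_conj, show -(a : ℂ) = ((-a : ℝ) : ℂ) by push_cast; ring,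
    show (1 : ℂ) - (normSq z : ℂ) = ((1 - normSq z : ℝ) : ℂ) by push_cast; ring,
    ← ofReal_cpow hX, ofReal_re]

theorem deltaA_eq_sqrt_one_sub_rpow (a : ℝ) {z w : ℂ} (hz : ‖z‖ < 1) (hw : ‖w‖ < 1) :
    deltaA a z w = Real.sqrt (1 - (1 - rhoDisc z w ^ 2) ^ a) := by
  have hX := one_sub_normSq_pos hz
  have hY := one_sub_normSq_pos hw
  have hA : 0 < ‖1 - z * conj w‖ := norm_pos_iff.mpr (one_sub_mul_conj_ne_zero hz hw)
  have hratio :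
      (‖1 - z * conj w‖ ^ (-a)) ^ 2 / ((1 - normSq z) ^ (-a) * (1 - normSq w) ^ (-a)) =
        ((1 - normSq z) * (1 - normSq w) / ‖1 - z * conj w‖ ^ 2) ^ a := by
    rw [Real.rpow_pow_comm hA.le, ← Real.mul_rpow hX.le hY.le, ← Real.div_rpow (by positivity)
      (by positivity), Real.rpow_neg (by positivity), ← Real.inv_rpow (by positivity), inv_div]
  rw [deltaA, norm_kA, kA_self_re a hz.le, kA_self_re a hw.le, hratio, one_sub_rhoDisc_sq hz hw]

/-- For `a ∈ (0,1)` and `z, w ∈ 𝔻`: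
`δ_a(z,w) = (1 − (1 − ρ(z,w)²)^a)^{1/2}` and `√a·ρ(z,w) ≤ δ_a(z,w) ≤ ρ(z,w)`. -/
theorem deltaA_equiv_pseudohyperbolic (a : ℝ) (ha : a ∈ Set.Ioo (0 : ℝ) 1)
    (z w : ℂ) (hz : ‖z‖ < 1) (hw : ‖w‖ < 1) :
    deltaA a z w = Real.sqrt (1 - (1 - rhoDisc z w ^ 2) ^ a) ∧
      Real.sqrt a * rhoDisc z w ≤ deltaA a z w ∧ deltaA a z w ≤ rhoDisc z w := by
  have hρ0 := rhoDisc_nonneg z w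
  have hρ1 := rhoDisc_le_one hz hw
  rw [deltaA_eq_sqrt_one_sub_rpow a hz hw]
  exact ⟨rfl, sqrt_mul_le_sqrt_one_sub_rpow_one_sub_sq hρ0 hρ1 ha.1.le ha.2.le,
    sqrt_one_sub_rpow_one_sub_sq_le hρ0 hρ1 ha.2.le⟩
end
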